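/- arXiv:2312.15734 — 9 statements merged into one kernel-verified Lean document; each statement's English description precedes it below -/
import Mathlib

section
/- Let E and F be metric spaces equipped with their Borel σ-algebras and let H : E → F be a mapping. Suppose there exist closed sets D_k ⊆ E for k ≥ 1 such that D_k ⊆ D_{k+1}, ⋃_{k≥1} D_k = E, and the restriction of H to every D_k is continuous. Suppose X_n are E-valued random variables with lim_{k→∞} sup_n P(X_n ∉ D_k) = 0, and that X_n → X in distribution in E as n → ∞, where X is an E-valued random variable. Then H(X_n) → H(X) in distribution in F as n → ∞. -/
/-!
Fix `g` and `k`. By Tietze, `g ∘ H` restricted to the closed set `D k` extends to a bounded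
continuous `f_k` on `E` with `‖f_k‖ ≤ ‖g‖`, so `𝔼[g(H(Y))]` and `𝔼[f_k(Y)]` differ by at most
`2‖g‖ P(Y ∉ D k)`. This error is uniform in `n` by tightness, and small for `X₀` because the `D k`
increase to `E`; since `𝔼[f_k(X n)] → 𝔼[f_k(X₀)]`, letting `k → ∞` gives the claim.
-/

open MeasureTheory Filter Topology Set

theorem Metric.tendsto_of_dist_le_of_tendsto {α ι : Type*} [PseudoMetricSpace α] {l : Filter ι}
    {a : ι → α} {a₀ : α} {b : ℕ → ι → α} {b₀ : ℕ → α} {r : ℕ → ℝ}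
    (hr : Tendsto r atTop (𝓝 0)) (hb : ∀ k, Tendsto (b k) l (𝓝 (b₀ k)))
    (hab : ∀ k i, dist (a i) (b k i) ≤ r k) (hab₀ : ∀ k, dist a₀ (b₀ k) ≤ r k) :
    Tendsto a l (𝓝 a₀) := by
  refine Metric.tendsto_nhds.2 fun ε hε => ?_
  obtain ⟨k, hk⟩ := (hr.eventually (gt_mem_nhds (by positivity : 0 < ε / 3))).exists
  filter_upwards [Metric.tendsto_nhds.1 (hb k) (ε / 3) (by positivity)] with i hi
  calc dist (a i) a₀ ≤ dist (a i) (b k i) + dist (b k i) (b₀ k) + dist (b₀ k) a₀ :=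
        dist_triangle4 _ _ _ _
    _ < ε := by linarith [hab k i, hab₀ k, dist_comm a₀ (b₀ k)]

theorem measurable_of_continuousOn_of_iUnion_eq_univ {α β ι : Type*} [TopologicalSpace α]
    [MeasurableSpace α] [OpensMeasurableSpace α] [TopologicalSpace β] [MeasurableSpace β]
    [BorelSpace β] [Countable ι] {f : α → β} {s : ι → Set α} (hs : ∀ i, MeasurableSet (s i))
    (hunion : ⋃ i, s i = univ) (hf : ∀ i, ContinuousOn f (s i)) : Measurable f := by
  refine measurable_of_isOpen fun U hU => ?_
  rw [← inter_univ (f ⁻¹' U), ← hunion, inter_iUnion]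
  refine MeasurableSet.iUnion fun i => ?_
  obtain ⟨V, hV, hVeq⟩ := continuousOn_iff'.1 (hf i) U hU
  rw [hVeq]
  exact hV.measurableSet.inter (hs i)

theorem tendsto_measure_compl_of_monotone_of_iUnion_eq_univ {Ω ι : Type*} [MeasurableSpace Ω]
    {μ : Measure Ω} [IsFiniteMeasure μ] [Preorder ι] [Nonempty ι]
    [IsCountablyGenerated (atTop : Filter ι)] {s : ι → Set Ω}
    (hs : ∀ i, NullMeasurableSet (s i) μ) (hmono : Monotone s) (hunion : ⋃ i, s i = univ) :
    Tendsto (fun i => μ (s i)ᶜ) atTop (𝓝 0) := by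
  have h := tendsto_measure_iInter_atTop (fun i => (hs i).compl)
    (fun _ _ hij => compl_subset_compl.2 (hmono hij)) ⟨Classical.arbitrary ι, measure_ne_top μ _⟩
  rwa [← compl_iUnion, hunion, compl_univ, measure_empty] at h

theorem norm_integral_sub_integral_le_of_eqOn {Ω G : Type*} [MeasurableSpace Ω]
    [NormedAddCommGroup G] [NormedSpace ℝ G] {μ : Measure Ω} [IsFiniteMeasure μ]
    {u v : Ω → G} {s : Set Ω} {C : ℝ} (hu : Integrable u μ) (hv : Integrable v μ)
    (huv : EqOn u v s) (hC : ∀ ω, ‖u ω - v ω‖ ≤ C) :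
    ‖∫ ω, u ω ∂μ - ∫ ω, v ω ∂μ‖ ≤ C * μ.real sᶜ := by
  rw [← integral_sub hu hv, ← setIntegral_eq_integral_of_forall_compl_eq_zero (s := sᶜ)
    fun ω hω => sub_eq_zero.2 (huv (not_not.1 hω))]
  exact norm_setIntegral_le_of_norm_le_const (measure_lt_top μ _) fun ω _ => hC ω

theorem BoundedContinuousFunction.exists_norm_le_eqOn_comp {E F : Type*} [TopologicalSpace E]
    [NormalSpace E] [TopologicalSpace F] (g : BoundedContinuousFunction F ℝ) {H : E → F}
    {D : Set E} (hD : IsClosed D) (hH : ContinuousOn H D) :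
    ∃ f : BoundedContinuousFunction E ℝ, ‖f‖ ≤ ‖g‖ ∧ EqOn f (g ∘ H) D := by
  obtain ⟨f, hf_norm, hf_eq⟩ :=
    exists_norm_eq_domRestrict_eq_of_closed (g.compContinuous ⟨D.domRestrict H, hH.domRestrict⟩) hD
  exact ⟨f, hf_norm.trans_le (g.norm_compContinuous_le _),
    fun x hx => congr($hf_eq ⟨x, hx⟩)⟩

theorem dist_integral_comp_le_of_eqOn {Ω E F : Type*} [MeasurableSpace Ω] [TopologicalSpace E]
    [MeasurableSpace E] [OpensMeasurableSpace E] [TopologicalSpace F] [MeasurableSpace F]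
    [OpensMeasurableSpace F] {P : Measure Ω} [IsFiniteMeasure P] {H : E → F} {D : Set E}
    {f : BoundedContinuousFunction E ℝ} {g : BoundedContinuousFunction F ℝ} (hf : ‖f‖ ≤ ‖g‖)
    (hfg : EqOn f (g ∘ H) D) (hH : Measurable H) {Y : Ω → E} (hY : Measurable Y) :
    dist (∫ ω, g (H (Y ω)) ∂P) (∫ ω, f (Y ω) ∂P) ≤ 2 * ‖g‖ * P.real {ω | Y ω ∉ D} := by
  refine norm_integral_sub_integral_le_of_eqOn (s := Y ⁻¹' D)
    ((g.integrable (P.map (H ∘ Y))).comp_measurable (hH.comp hY))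
    ((f.integrable (P.map Y)).comp_measurable hY) (fun ω hω => (hfg hω).symm) fun ω => ?_
  calc ‖g (H (Y ω)) - f (Y ω)‖ ≤ ‖g‖ + ‖f‖ :=
        (norm_sub_le _ _).trans (add_le_add (g.norm_coe_le_norm _) (f.norm_coe_le_norm _))
    _ ≤ 2 * ‖g‖ := by linarith

/-- Continuous mapping theorem for maps continuous on an increasing
exhaustion by closed sets, with uniform control on the probability of escaping the sets. -/
theorem stmt0
    {E F Ω : Type*} [MetricSpace E] [MetricSpace F]
    [MeasurableSpace E] [BorelSpace E] [MeasurableSpace F] [BorelSpace F]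
    [MeasurableSpace Ω] (P : Measure Ω) [IsProbabilityMeasure P]
    (H : E → F) (D : ℕ → Set E)
    (hclosed : ∀ k, IsClosed (D k))
    (hmono : ∀ k, D k ⊆ D (k + 1))
    (hunion : (⋃ k, D k) = Set.univ)
    (hcont : ∀ k, ContinuousOn H (D k))
    (X : ℕ → Ω → E) (X₀ : Ω → E)
    (hX : ∀ n, Measurable (X n)) (hX₀ : Measurable X₀)
    (htight : Tendsto (fun k => ⨆ n, P {ω | X n ω ∉ D k}) atTop (𝓝 0))
    (hconv : ∀ f : BoundedContinuousFunction E ℝ,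
      Tendsto (fun n => ∫ ω, f (X n ω) ∂P) atTop (𝓝 (∫ ω, f (X₀ ω) ∂P))) :
    ∀ g : BoundedContinuousFunction F ℝ,
      Tendsto (fun n => ∫ ω, g (H (X n ω)) ∂P) atTop (𝓝 (∫ ω, g (H (X₀ ω)) ∂P)) := by
  intro g
  have hH : Measurable H := measurable_of_continuousOn_of_iUnion_eq_univ
    (fun k => (hclosed k).measurableSet) hunion hcont
  choose f hf_norm hf_eq using fun k => g.exists_norm_le_eqOn_comp (hclosed k) (hcont k)
  have htight₀ : Tendsto (fun k => P {ω | X₀ ω ∉ D k}) atTop (𝓝 0) :=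
    tendsto_measure_compl_of_monotone_of_iUnion_eq_univ (s := fun k => X₀ ⁻¹' D k)
      (fun k => (hX₀ (hclosed k).measurableSet).nullMeasurableSet)
      (fun _ _ hij => preimage_mono (monotone_nat_of_le_succ hmono hij))
      (by rw [← preimage_iUnion, hunion, preimage_univ])
  set tail := fun k => (⨆ n, P {ω | X n ω ∉ D k}) + P {ω | X₀ ω ∉ D k}
  have htail_ne_top : ∀ k, tail k ≠ ⊤ := fun k => ENNReal.add_ne_top.2
    ⟨ne_top_of_le_ne_top ENNReal.one_ne_top (iSup_le fun n => prob_le_one), measure_ne_top P _⟩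
  refine Metric.tendsto_of_dist_le_of_tendsto (b := fun k n => ∫ ω, f k (X n ω) ∂P)
    (r := fun k => 2 * ‖g‖ * (tail k).toReal) ?_ (fun k => hconv (f k)) (fun k n => ?_)
    (fun k => ?_)
  · simpa using ((ENNReal.tendsto_toReal ENNReal.zero_ne_top).comp
      (by simpa using htight.add htight₀)).const_mul (2 * ‖g‖)
  · refine (dist_integral_comp_le_of_eqOn (hf_norm k) (hf_eq k) hH (hX n)).trans ?_
    gcongr
    exact ENNReal.toReal_mono (htail_ne_top k) (le_add_right (le_iSup_of_le n le_rfl))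
  · refine (dist_integral_comp_le_of_eqOn (hf_norm k) (hf_eq k) hH hX₀).trans ?_
    gcongr
    exact ENNReal.toReal_mono (htail_ne_top k) le_add_self
end

section
/- Let δ > 0, let g_1, g_2 ∈ D([a,b],ℝ^d) and h_1, h_2 ∈ D([a,b+δ],ℝ^d) be càdlàg, and suppose h_i = g_i ∘ ρ_i for some continuous increasing bijections ρ_i : [a,b+δ] → [a,b], i = 1,2. Then |σ_∞(g_1,g_2) − σ_∞(h_1,h_2)| ≤ disc(ρ_1) + disc(ρ_2), where σ_∞ denotes the Skorokhod J1 metric on D([a,b],ℝ^d) and on D([a,b+δ],ℝ^d) respectively. Moreover, if in addition all of g_1, g_2, h_1, h_2 have finite p-variation for some p ∈ [1,∞), then the same inequality holds with σ_∞ replaced by σ_{p-var}. -/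
open scoped ENNReal

/-- The `p`-variation semi-norm of `f : [a,b] → ℝ^d` (valued in `ℝ≥0∞`). -/
noncomputable def pVar {d : ℕ} (p : ℝ) (f : ℝ → EuclideanSpace ℝ (Fin d)) (a b : ℝ) : ℝ≥0∞ :=
  ⨆ (k : ℕ) (t : ℕ → ℝ) (_ : t 0 = a) (_ : t k = b)
      (_ : ∀ j < k, t j < t (j + 1)),
    (∑ j ∈ Finset.range k, ENNReal.ofReal ‖f (t (j + 1)) - f (t j)‖ ^ p) ^ (1 / p)

/-- `ρ` restricts to a continuous increasing bijection from `[a,b]` onto `[c,d]`. -/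
def IsReparTo (a b c d : ℝ) (ρ : ℝ → ℝ) : Prop :=
  ContinuousOn ρ (Set.Icc a b) ∧ StrictMonoOn ρ (Set.Icc a b) ∧
    ρ '' Set.Icc a b = Set.Icc c d

/-- `disc(ρ) = sup_{x ∈ [a,b]} |ρ x - x|`. -/
noncomputable def disc (a b : ℝ) (ρ : ℝ → ℝ) : ℝ≥0∞ :=
  ⨆ x ∈ Set.Icc a b, ENNReal.ofReal |ρ x - x|

/-- The Skorokhod `J1` metric on `D([a,b],ℝ^d)`:
`σ_∞(g,h) = inf_ρ max{ sup|ρ x - x| , sup|g(ρ x) - h x| }`. -/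
noncomputable def sigmaJ1 {d : ℕ} (a b : ℝ) (g h : ℝ → EuclideanSpace ℝ (Fin d)) : ℝ≥0∞ :=
  ⨅ (ρ : ℝ → ℝ) (_ : IsReparTo a b a b ρ),
    max (disc a b ρ) (⨆ x ∈ Set.Icc a b, ENNReal.ofReal ‖g (ρ x) - h x‖)

/-- `σ_{p-var}(g,h) = inf_ρ max{ disc ρ, ‖g∘ρ − h‖_{p-var} }`, with
`‖f‖_{p-var} = |f(a)| + |f|_{p-var}`. -/
noncomputable def sigmaPVar {d : ℕ} (p : ℝ) (a b : ℝ)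
    (g h : ℝ → EuclideanSpace ℝ (Fin d)) : ℝ≥0∞ :=
  ⨅ (ρ : ℝ → ℝ) (_ : IsReparTo a b a b ρ),
    max (disc a b ρ)
      (ENNReal.ofReal ‖g (ρ a) - h a‖ + pVar p (fun x => g (ρ x) - h x) a b)

/-- `f` is càdlàg on `[a,b]`: right-continuous on `[a,b)` and with left limits on `(a,b]`
(limits taken within the interval). -/
def Cadlag {d : ℕ} (a b : ℝ) (f : ℝ → EuclideanSpace ℝ (Fin d)) : Prop :=
  (∀ t ∈ Set.Ico a b, Filter.Tendsto f (nhdsWithin t (Set.Ioc t b)) (nhds (f t))) ∧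
  (∀ t ∈ Set.Ioc a b, ∃ l, Filter.Tendsto f (nhdsWithin t (Set.Ico a t)) (nhds l))

/-!
A time change `κ` of `[a, b + δ]` is transported to the time change `μ = ρ₁ ∘ κ ∘ ρ₂⁻¹` of
`[a, b]`. Then `g₁ ∘ μ - g₂` is `h₁ ∘ κ - h₂` reparametrised by `ρ₂⁻¹`, which changes neither its
sup norm nor its `p`-variation norm, while `|μ x - x| ≤ disc ρ₁ + disc κ + disc ρ₂⁻¹` by the
triangle inequality, and `disc ρ₂⁻¹ = disc ρ₂`. Taking the infimum over `κ` gives one inequality;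
the other is the same argument for `gᵢ = hᵢ ∘ ρᵢ⁻¹`.
-/

open Set

lemma mem_Icc_of_partition {α : Type*} [Preorder α] {t : ℕ → α} {k j : ℕ}
    (ht : ∀ i < k, t i < t (i + 1)) (hj : j ≤ k) : t j ∈ Icc (t 0) (t k) :=
  have hmono := (strictMonoOn_Iic_of_lt_succ (ψ := t) fun i hi => by
    simpa only [Order.succ_eq_add_one] using ht i hi).monotoneOn
  ⟨hmono (Nat.zero_le k) hj (Nat.zero_le j), hmono hj (le_refl k) hj⟩

lemma pVar_le_of_eqOn_comp {d : ℕ} (p : ℝ) {f F : ℝ → EuclideanSpace ℝ (Fin d)}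
    {ρ : ℝ → ℝ} {a b c e : ℝ} (hρ : StrictMonoOn ρ (Icc a b)) (ha : ρ a = c) (hb : ρ b = e)
    (hf : EqOn f (F ∘ ρ) (Icc a b)) : pVar p f a b ≤ pVar p F c e := by
  refine iSup_le fun k => iSup_le fun t => iSup_le fun h0 => iSup_le fun hk =>
    iSup_le fun ht => ?_
  have hmem : ∀ j ≤ k, t j ∈ Icc a b := fun j hj => h0 ▸ hk ▸ mem_Icc_of_partition ht hj
  have hsum : ∑ j ∈ Finset.range k, ENNReal.ofReal ‖f (t (j + 1)) - f (t j)‖ ^ p =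
      ∑ j ∈ Finset.range k, ENNReal.ofReal ‖F (ρ (t (j + 1))) - F (ρ (t j))‖ ^ p := by
    refine Finset.sum_congr rfl fun j hj => ?_
    have hjk := Finset.mem_range.mp hj
    rw [hf (hmem (j + 1) hjk), hf (hmem j hjk.le), Function.comp_apply, Function.comp_apply]
  rw [hsum]
  exact le_iSup_of_le k <| le_iSup_of_le (ρ ∘ t) <| le_iSup_of_le (by simp [h0, ha]) <|
    le_iSup_of_le (by simp [hk, hb]) <|
    le_iSup_of_le (fun j hj => hρ (hmem j hj.le) (hmem (j + 1) hj) (ht j hj)) le_rfl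

lemma MonotoneOn.continuousOn_of_image_Icc {α β : Type*} [LinearOrder α] [TopologicalSpace α]
    [OrderTopology α] [LinearOrder β] [TopologicalSpace β] [OrderTopology β] [DenselyOrdered β]
    {f : α → β} {a b : α} {c d : β} (hf : MonotoneOn f (Icc a b))
    (himg : f '' Icc a b = Icc c d) : ContinuousOn f (Icc a b) := by
  have hmaps : MapsTo f (Icc a b) (Icc c d) := himg ▸ mapsTo_image f _
  have hsurj : Function.Surjective (hmaps.restrict f _ _) :=
    hmaps.restrict_surjective_iff.mpr himg.symm.subset
  have hmono : Monotone (hmaps.restrict f _ _) := fun x y hxy => hf x.2 y.2 hxy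
  rw [continuousOn_iff_continuous_domRestrict]
  exact continuous_subtype_val.comp (hmono.continuous_of_surjective hsurj)

namespace IsReparTo

variable {a b c d : ℝ} {ρ : ℝ → ℝ}

lemma mapsTo (h : IsReparTo a b c d ρ) : MapsTo ρ (Icc a b) (Icc c d) :=
  h.2.2 ▸ mapsTo_image ρ _

lemma le_iff (h : IsReparTo a b c d ρ) : a ≤ b ↔ c ≤ d := by
  rw [← nonempty_Icc, ← nonempty_Icc (a := c), ← h.2.2, image_nonempty]

lemma left (h : IsReparTo a b c d ρ) (hab : a ≤ b) : ρ a = c :=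
  (h.2.1.monotoneOn.map_isLeast (isLeast_Icc hab)).unique (h.2.2 ▸ isLeast_Icc (h.le_iff.1 hab))

lemma right (h : IsReparTo a b c d ρ) (hab : a ≤ b) : ρ b = d :=
  (h.2.1.monotoneOn.map_isGreatest (isGreatest_Icc hab)).unique
    (h.2.2 ▸ isGreatest_Icc (h.le_iff.1 hab))

lemma comp {e f : ℝ} {τ : ℝ → ℝ} (hρ : IsReparTo a b c d ρ) (hτ : IsReparTo c d e f τ) :
    IsReparTo a b e f (τ ∘ ρ) :=
  ⟨hτ.1.comp hρ.1 hρ.mapsTo, hτ.2.1.comp hρ.2.1 hρ.mapsTo, by rw [image_comp, hρ.2.2, hτ.2.2]⟩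

lemma exists_invOn (h : IsReparTo a b c d ρ) :
    ∃ ι, IsReparTo c d a b ι ∧ InvOn ι ρ (Icc a b) (Icc c d) := by
  have hsurj : SurjOn ρ (Icc a b) (Icc c d) := h.2.2.symm.subset
  set ι := Function.invFunOn ρ (Icc a b)
  have hinv : InvOn ι ρ (Icc a b) (Icc c d) :=
    ⟨h.2.1.injOn.leftInvOn_invFunOn, hsurj.rightInvOn_invFunOn⟩
  have himg : ι '' Icc c d = Icc a b :=
    (hinv.symm.bijOn hsurj.mapsTo_invFunOn h.mapsTo).image_eq
  have hmono : StrictMonoOn ι (Icc c d) := fun y hy z hz hyz =>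
    (h.2.1.lt_iff_lt (hsurj.mapsTo_invFunOn hy) (hsurj.mapsTo_invFunOn hz)).1 <| by
      rwa [hinv.2 hy, hinv.2 hz]
  exact ⟨ι, ⟨hmono.monotoneOn.continuousOn_of_image_Icc himg, hmono, himg⟩, hinv⟩

end IsReparTo

lemma Set.EqOn.comp_rightInvOn {α β γ : Type*} {G : α → γ} {H : β → γ} {τ : β → α} {ι : α → β}
    {s : Set β} {t : Set α} (h : EqOn H (G ∘ τ) s) (hι : MapsTo ι t s)
    (hinv : RightInvOn ι τ t) : EqOn G (H ∘ ι) t := fun y hy => by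
  rw [Function.comp_apply, h (hι hy), Function.comp_apply, hinv hy]

section disc

variable {a b c e : ℝ}

lemma le_disc {ρ : ℝ → ℝ} {x : ℝ} (hx : x ∈ Icc a b) : ENNReal.ofReal |ρ x - x| ≤ disc a b ρ :=
  le_iSup₂ (f := fun x (_ : x ∈ Icc a b) => ENNReal.ofReal |ρ x - x|) x hx

lemma disc_comp_le {ρ σ : ℝ → ℝ} (hσ : MapsTo σ (Icc a b) (Icc c e)) :
    disc a b (ρ ∘ σ) ≤ disc c e ρ + disc a b σ := by
  refine iSup₂_le fun x hx => ?_
  calc ENNReal.ofReal |ρ (σ x) - x|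
      ≤ ENNReal.ofReal (|ρ (σ x) - σ x| + |σ x - x|) :=
        ENNReal.ofReal_le_ofReal (abs_sub_le _ _ _)
    _ ≤ ENNReal.ofReal |ρ (σ x) - σ x| + ENNReal.ofReal |σ x - x| := ENNReal.ofReal_add_le
    _ ≤ disc c e ρ + disc a b σ := add_le_add (le_disc (hσ hx)) (le_disc hx)

lemma disc_le_of_rightInvOn {ρ ι : ℝ → ℝ} (hι : MapsTo ι (Icc c e) (Icc a b))
    (hinv : RightInvOn ι ρ (Icc c e)) : disc c e ι ≤ disc a b ρ := by
  refine iSup₂_le fun y hy => ?_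
  calc ENNReal.ofReal |ι y - y| = ENNReal.ofReal |ρ (ι y) - ι y| := by
        rw [hinv hy, abs_sub_comm]
    _ ≤ disc a b ρ := le_disc (hι hy)

end disc

section Skorokhod

variable {E : Type*} [Sub E]

noncomputable def skorokhodDist (N : ℝ → ℝ → (ℝ → E) → ℝ≥0∞) (a b : ℝ) (g h : ℝ → E) : ℝ≥0∞ :=
  ⨅ (ρ : ℝ → ℝ) (_ : IsReparTo a b a b ρ), max (disc a b ρ) (N a b fun x => g (ρ x) - h x)

def ReparNonincreasing (N : ℝ → ℝ → (ℝ → E) → ℝ≥0∞) : Prop :=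
  ∀ ⦃a u v : ℝ⦄ ⦃ι : ℝ → ℝ⦄ ⦃f f' : ℝ → E⦄,
    a ≤ u → IsReparTo a u a v ι → EqOn f' (f ∘ ι) (Icc a u) → N a u f' ≤ N a v f

variable {N : ℝ → ℝ → (ℝ → E) → ℝ≥0∞} {a u v : ℝ} {G₁ G₂ H₁ H₂ : ℝ → E} {τ₁ τ₂ : ℝ → ℝ}

theorem skorokhodDist_le_skorokhodDist_comp_add_disc (hN : ReparNonincreasing N) (hau : a ≤ u)
    (hτ₁ : IsReparTo a v a u τ₁) (hτ₂ : IsReparTo a v a u τ₂)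
    (hH₁ : EqOn H₁ (G₁ ∘ τ₁) (Icc a v)) (hH₂ : EqOn H₂ (G₂ ∘ τ₂) (Icc a v)) :
    skorokhodDist N a u G₁ G₂ ≤ skorokhodDist N a v H₁ H₂ + disc a v τ₁ + disc a v τ₂ := by
  obtain ⟨ι₂, hι₂, hinv₂⟩ := hτ₂.exists_invOn
  rw [add_assoc, skorokhodDist.eq_1 N a v, ENNReal.iInf₂_add]
  refine le_iInf₂ fun κ hκ => ?_
  have hμ : IsReparTo a u a u (τ₁ ∘ κ ∘ ι₂) := (hι₂.comp hκ).comp hτ₁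
  have hdisc : disc a u (τ₁ ∘ κ ∘ ι₂) ≤ disc a v κ + (disc a v τ₁ + disc a v τ₂) :=
    calc disc a u (τ₁ ∘ (κ ∘ ι₂))
        ≤ disc a v τ₁ + (disc a v κ + disc a u ι₂) :=
          (disc_comp_le (hι₂.comp hκ).mapsTo).trans (by gcongr; exact disc_comp_le hι₂.mapsTo)
      _ ≤ disc a v τ₁ + (disc a v κ + disc a v τ₂) := by
          gcongr; exact disc_le_of_rightInvOn hι₂.mapsTo hinv₂.2
      _ = disc a v κ + (disc a v τ₁ + disc a v τ₂) := by ring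
  have hsize : N a u (fun y => G₁ ((τ₁ ∘ κ ∘ ι₂) y) - G₂ y) ≤
      N a v (fun x => H₁ (κ x) - H₂ x) := by
    refine hN hau hι₂ fun y hy => ?_
    simp only [Function.comp_apply]
    rw [hH₁ (hκ.mapsTo (hι₂.mapsTo hy)), hH₂ (hι₂.mapsTo hy), Function.comp_apply,
      Function.comp_apply, hinv₂.2 hy]
  calc skorokhodDist N a u G₁ G₂
      ≤ max (disc a u (τ₁ ∘ κ ∘ ι₂)) (N a u fun y => G₁ ((τ₁ ∘ κ ∘ ι₂) y) - G₂ y) :=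
        iInf₂_le _ hμ
    _ ≤ max (disc a v κ) (N a v fun x => H₁ (κ x) - H₂ x) + (disc a v τ₁ + disc a v τ₂) :=
        max_le (hdisc.trans (by gcongr; exact le_max_left _ _))
          (hsize.trans ((le_max_right _ _).trans le_self_add))

theorem skorokhodDist_comp_le_skorokhodDist_add_disc (hN : ReparNonincreasing N) (hau : a ≤ u)
    (hτ₁ : IsReparTo a v a u τ₁) (hτ₂ : IsReparTo a v a u τ₂)
    (hH₁ : EqOn H₁ (G₁ ∘ τ₁) (Icc a v)) (hH₂ : EqOn H₂ (G₂ ∘ τ₂) (Icc a v)) :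
    skorokhodDist N a v H₁ H₂ ≤ skorokhodDist N a u G₁ G₂ + disc a v τ₁ + disc a v τ₂ := by
  obtain ⟨ι₁, hι₁, hinv₁⟩ := hτ₁.exists_invOn
  obtain ⟨ι₂, hι₂, hinv₂⟩ := hτ₂.exists_invOn
  calc skorokhodDist N a v H₁ H₂
      ≤ skorokhodDist N a u G₁ G₂ + disc a u ι₁ + disc a u ι₂ :=
        skorokhodDist_le_skorokhodDist_comp_add_disc hN (hτ₁.le_iff.2 hau) hι₁ hι₂
          (hH₁.comp_rightInvOn hι₁.mapsTo hinv₁.2) (hH₂.comp_rightInvOn hι₂.mapsTo hinv₂.2)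
    _ ≤ skorokhodDist N a u G₁ G₂ + disc a v τ₁ + disc a v τ₂ := by
        gcongr
        · exact disc_le_of_rightInvOn hι₁.mapsTo hinv₁.2
        · exact disc_le_of_rightInvOn hι₂.mapsTo hinv₂.2

end Skorokhod

noncomputable def supNormIcc {E : Type*} [Norm E] (a b : ℝ) (f : ℝ → E) : ℝ≥0∞ :=
  ⨆ x ∈ Icc a b, ENNReal.ofReal ‖f x‖

noncomputable def pVarNorm {d : ℕ} (p a b : ℝ) (f : ℝ → EuclideanSpace ℝ (Fin d)) : ℝ≥0∞ :=
  ENNReal.ofReal ‖f a‖ + pVar p f a b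

lemma reparNonincreasing_supNormIcc {E : Type*} [SeminormedAddGroup E] :
    ReparNonincreasing (supNormIcc (E := E)) := fun _ _ _ _ _ _ _ hι hf =>
  iSup₂_le fun y hy => by
    rw [hf hy]
    exact le_iSup₂ (f := fun x (_ : x ∈ Icc _ _) => ENNReal.ofReal ‖_‖) _ (hι.mapsTo hy)

lemma reparNonincreasing_pVarNorm {d : ℕ} (p : ℝ) :
    ReparNonincreasing (pVarNorm (d := d) p) := fun a _ _ _ _ _ hau hι hf => by
  refine add_le_add ?_ (pVar_le_of_eqOn_comp p hι.2.1 (hι.left hau) (hι.right hau) hf)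
  rw [hf (left_mem_Icc.2 hau), Function.comp_apply, hι.left hau]

lemma sigmaJ1_eq_skorokhodDist {d : ℕ} (a b : ℝ) (g h : ℝ → EuclideanSpace ℝ (Fin d)) :
    sigmaJ1 a b g h = skorokhodDist supNormIcc a b g h := rfl

lemma sigmaPVar_eq_skorokhodDist {d : ℕ} (p a b : ℝ) (g h : ℝ → EuclideanSpace ℝ (Fin d)) :
    sigmaPVar p a b g h = skorokhodDist (pVarNorm p) a b g h := rfl

theorem stmt3_general {d : ℕ} (a b δ : ℝ) (hab : a < b)
    (g₁ g₂ h₁ h₂ : ℝ → EuclideanSpace ℝ (Fin d))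
    (ρ₁ ρ₂ : ℝ → ℝ)
    (hρ₁ : IsReparTo a (b + δ) a b ρ₁) (hρ₂ : IsReparTo a (b + δ) a b ρ₂)
    (hcomp₁ : ∀ x ∈ Set.Icc a (b + δ), h₁ x = g₁ (ρ₁ x))
    (hcomp₂ : ∀ x ∈ Set.Icc a (b + δ), h₂ x = g₂ (ρ₂ x)) :
    (sigmaJ1 a b g₁ g₂ ≤ sigmaJ1 a (b + δ) h₁ h₂ + disc a (b + δ) ρ₁ + disc a (b + δ) ρ₂
      ∧ sigmaJ1 a (b + δ) h₁ h₂ ≤ sigmaJ1 a b g₁ g₂ + disc a (b + δ) ρ₁ + disc a (b + δ) ρ₂)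
    ∧ ∀ p : ℝ, 1 ≤ p →
        pVar p g₁ a b < ⊤ → pVar p g₂ a b < ⊤ →
        pVar p h₁ a (b + δ) < ⊤ → pVar p h₂ a (b + δ) < ⊤ →
        (sigmaPVar p a b g₁ g₂
            ≤ sigmaPVar p a (b + δ) h₁ h₂ + disc a (b + δ) ρ₁ + disc a (b + δ) ρ₂
          ∧ sigmaPVar p a (b + δ) h₁ h₂
            ≤ sigmaPVar p a b g₁ g₂ + disc a (b + δ) ρ₁ + disc a (b + δ) ρ₂) := by
  simp only [sigmaJ1_eq_skorokhodDist, sigmaPVar_eq_skorokhodDist]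
  refine ⟨⟨?_, ?_⟩, fun p _ _ _ _ _ => ⟨?_, ?_⟩⟩
  · exact skorokhodDist_le_skorokhodDist_comp_add_disc reparNonincreasing_supNormIcc hab.le
      hρ₁ hρ₂ hcomp₁ hcomp₂
  · exact skorokhodDist_comp_le_skorokhodDist_add_disc reparNonincreasing_supNormIcc hab.le
      hρ₁ hρ₂ hcomp₁ hcomp₂
  · exact skorokhodDist_le_skorokhodDist_comp_add_disc (reparNonincreasing_pVarNorm p) hab.le
      hρ₁ hρ₂ hcomp₁ hcomp₂
  · exact skorokhodDist_comp_le_skorokhodDist_add_disc (reparNonincreasing_pVarNorm p) hab.le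
      hρ₁ hρ₂ hcomp₁ hcomp₂

/-- If `h_i = g_i ∘ ρ_i` for continuous increasing bijections
`ρ_i : [a,b+δ] → [a,b]`, then the Skorokhod `J1` distances of the pairs differ by at most
`disc ρ₁ + disc ρ₂`, and likewise for the `p`-variation Skorokhod distances when all four
paths have finite `p`-variation. -/
theorem stmt3 {d : ℕ} (a b δ : ℝ) (hab : a < b) (hδ : 0 < δ)
    (g₁ g₂ h₁ h₂ : ℝ → EuclideanSpace ℝ (Fin d))
    (ρ₁ ρ₂ : ℝ → ℝ)
    (hg₁ : Cadlag a b g₁) (hg₂ : Cadlag a b g₂)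
    (hh₁ : Cadlag a (b + δ) h₁) (hh₂ : Cadlag a (b + δ) h₂)
    (hρ₁ : IsReparTo a (b + δ) a b ρ₁) (hρ₂ : IsReparTo a (b + δ) a b ρ₂)
    (hcomp₁ : ∀ x ∈ Set.Icc a (b + δ), h₁ x = g₁ (ρ₁ x))
    (hcomp₂ : ∀ x ∈ Set.Icc a (b + δ), h₂ x = g₂ (ρ₂ x)) :
    (sigmaJ1 a b g₁ g₂ ≤ sigmaJ1 a (b + δ) h₁ h₂ + disc a (b + δ) ρ₁ + disc a (b + δ) ρ₂
      ∧ sigmaJ1 a (b + δ) h₁ h₂ ≤ sigmaJ1 a b g₁ g₂ + disc a (b + δ) ρ₁ + disc a (b + δ) ρ₂)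
    ∧ ∀ p : ℝ, 1 ≤ p →
        pVar p g₁ a b < ⊤ → pVar p g₂ a b < ⊤ →
        pVar p h₁ a (b + δ) < ⊤ → pVar p h₂ a (b + δ) < ⊤ →
        (sigmaPVar p a b g₁ g₂
            ≤ sigmaPVar p a (b + δ) h₁ h₂ + disc a (b + δ) ρ₁ + disc a (b + δ) ρ₂
          ∧ sigmaPVar p a (b + δ) h₁ h₂
            ≤ sigmaPVar p a b g₁ g₂ + disc a (b + δ) ρ₁ + disc a (b + δ) ρ₂) :=
  stmt3_general a b δ hab g₁ g₂ h₁ h₂ ρ₁ ρ₂ hρ₁ hρ₂ hcomp₁ hcomp₂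
end

section
/- Let (Σ,μ) be a probability space and f : Σ → Σ a measurable map. Let θ_1 ∈ (1,2), γ ∈ (0,1), and for each n ≥ 1 let A_n ⊆ D_n ⊆ Σ be measurable sets. Suppose: (i) there is C_1 > 0 with |μ(A_n ∩ f^{−k}A_n) − μ(A_n)^2| ≤ C_1 γ^k for all k, n ≥ 1; (ii) there is C_2 > 0 with μ(A_n) ≤ C_2 n^{−1} for all n ≥ 1; (iii) there is C_3 > 0 with μ(D_n ∩ f^{−k}D_n) ≤ C_3 n^{−θ_1} for all n ≥ 1 and 1 ≤ k ≤ n. Then there exists C > 0 such that μ(A_n ∩ f^{−k}A_n) ≤ C n^{−θ_1} for all k, n ≥ 1. -/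
open MeasureTheory

/-- Combining exponential decay of correlations for the sets `A n`,
the bound `μ(A n) ≤ C₂/n`, and non-clustering for the enveloping sets `D n`, one gets
`μ(A n ∩ f^{-k} A n) ≤ C n^{-θ₁}` uniformly in `k, n ≥ 1`. -/
theorem stmt6 {Ω : Type*} [MeasurableSpace Ω] (μ : Measure Ω) [IsProbabilityMeasure μ]
    (f : Ω → Ω) (hf : Measurable f)
    (θ₁ γ : ℝ) (hθ₁ : 1 < θ₁) (hθ₂ : θ₁ < 2) (hγ0 : 0 < γ) (hγ1 : γ < 1)
    (A D : ℕ → Set Ω) (hAm : ∀ n, MeasurableSet (A n)) (hDm : ∀ n, MeasurableSet (D n))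
    (hAD : ∀ n, A n ⊆ D n)
    (C₁ : ℝ) (hC₁ : 0 < C₁)
    (h1 : ∀ n ≥ 1, ∀ k ≥ 1,
      |(μ (A n ∩ f^[k] ⁻¹' A n)).toReal - (μ (A n)).toReal ^ 2| ≤ C₁ * γ ^ k)
    (C₂ : ℝ) (hC₂ : 0 < C₂)
    (h2 : ∀ n : ℕ, n ≥ 1 → (μ (A n)).toReal ≤ C₂ / (n : ℝ))
    (C₃ : ℝ) (hC₃ : 0 < C₃)
    (h3 : ∀ n : ℕ, n ≥ 1 → ∀ k : ℕ, 1 ≤ k → k ≤ n →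
      (μ (D n ∩ f^[k] ⁻¹' D n)).toReal ≤ C₃ * (n : ℝ) ^ (-θ₁)) :
    ∃ C > (0 : ℝ), ∀ n : ℕ, n ≥ 1 → ∀ k : ℕ, k ≥ 1 →
      (μ (A n ∩ f^[k] ⁻¹' A n)).toReal ≤ C * (n : ℝ) ^ (-θ₁) := by
  -- The sequence n² γⁿ tends to 0, hence is bounded above by some M.
  have htend : Filter.Tendsto (fun n : ℕ => (n : ℝ) ^ 2 * γ ^ n) Filter.atTop (nhds 0) :=
    tendsto_pow_const_mul_const_pow_of_abs_lt_one 2 (by rw [abs_of_pos hγ0]; exact hγ1)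
  obtain ⟨M, hM⟩ := htend.bddAbove_range
  set M1 : ℝ := max M 1 with hM1def
  have hM1pos : (0:ℝ) < M1 := lt_of_lt_of_le one_pos (le_max_right _ _)
  have hMbd : ∀ n : ℕ, (n : ℝ) ^ 2 * γ ^ n ≤ M1 := fun n =>
    le_trans (hM ⟨n, rfl⟩) (le_max_left _ _)
  refine ⟨C₃ + C₂ ^ 2 + C₁ * M1, by positivity, ?_⟩
  intro n hn k hk
  have hn1 : (1:ℝ) ≤ (n:ℝ) := by exact_mod_cast hn
  have npos : (0:ℝ) < (n:ℝ) := lt_of_lt_of_le one_pos hn1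
  have hrpos : (0:ℝ) < (n:ℝ) ^ (-θ₁) := Real.rpow_pos_of_pos npos _
  have h2le : (n:ℝ) ^ (-(2:ℝ)) ≤ (n:ℝ) ^ (-θ₁) :=
    Real.rpow_le_rpow_of_exponent_le hn1 (by linarith)
  have h2eq : (n:ℝ) ^ (-(2:ℝ)) = ((n:ℝ) ^ 2)⁻¹ := by
    rw [Real.rpow_neg npos.le, show (2:ℝ) = ((2:ℕ):ℝ) by norm_num, Real.rpow_natCast]
  by_cases hkn : k ≤ n
  · -- use hypothesis (iii)
    have hsub : A n ∩ f^[k] ⁻¹' A n ⊆ D n ∩ f^[k] ⁻¹' D n :=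
      Set.inter_subset_inter (hAD n) (Set.preimage_mono (hAD n))
    have hmono : (μ (A n ∩ f^[k] ⁻¹' A n)).toReal ≤ (μ (D n ∩ f^[k] ⁻¹' D n)).toReal :=
      ENNReal.toReal_mono (measure_ne_top μ _) (measure_mono hsub)
    have := h3 n hn k hk hkn
    nlinarith [mul_pos hC₁ hM1pos, sq_nonneg C₂]
  · -- k > n : use (i) and (ii)
    push_neg at hkn
    have habs := h1 n hn k hk
    have hle1 : (μ (A n ∩ f^[k] ⁻¹' A n)).toReal ≤ (μ (A n)).toReal ^ 2 + C₁ * γ ^ k := by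
      have := abs_le.mp habs
      linarith [this.2]
    -- bound μ(A n)² ≤ C₂² n^{-θ₁}
    have hμA : (0:ℝ) ≤ (μ (A n)).toReal := ENNReal.toReal_nonneg
    have hA2 : (μ (A n)).toReal ^ 2 ≤ C₂ ^ 2 * (n:ℝ) ^ (-θ₁) := by
      have h : (μ (A n)).toReal ^ 2 ≤ (C₂ / n) ^ 2 := by
        apply pow_le_pow_left₀ hμA (h2 n hn)
      calc (μ (A n)).toReal ^ 2 ≤ (C₂ / n) ^ 2 := h
        _ = C₂ ^ 2 * (n:ℝ) ^ (-(2:ℝ)) := by rw [h2eq]; field_simp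
        _ ≤ C₂ ^ 2 * (n:ℝ) ^ (-θ₁) := by
            exact mul_le_mul_of_nonneg_left h2le (sq_nonneg C₂)
    -- bound γ^k ≤ γ^n ≤ M1 n^{-θ₁}
    have hγk : γ ^ k ≤ γ ^ n := pow_le_pow_of_le_one hγ0.le hγ1.le hkn.le
    have hγn : γ ^ n ≤ M1 * (n:ℝ) ^ (-θ₁) := by
      have hb := hMbd n
      have : γ ^ n ≤ M1 * (n:ℝ) ^ (-(2:ℝ)) := by
        rw [h2eq, ← div_eq_mul_inv, le_div_iff₀ (by positivity : (0:ℝ) < (n:ℝ) ^ 2)]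
        nlinarith
      exact this.trans (mul_le_mul_of_nonneg_left h2le hM1pos.le)
    have : C₁ * γ ^ k ≤ C₁ * M1 * (n:ℝ) ^ (-θ₁) := by
      rw [mul_assoc]
      exact mul_le_mul_of_nonneg_left (hγk.trans hγn) hC₁.le
    nlinarith [mul_pos hC₃ hrpos]
end

section
/- Let (Σ,μ) be a probability space and f : Σ → Σ a measurable map. Let 𝒲_0 = {W_1,…,W_K} be a finite collection of measurable subsets of Σ, let A ⊆ Σ be a measurable set with W_i ⊆ A for every i, and define τ_A(x) = inf{ n ≥ 1 : f^n x ∈ A } (with value ∞ if no such n exists). For p ≥ 1 define Q_p = sup |μ(A' ∩ B) − μ(A')μ(B)|, the supremum over all A' ∈ 𝒲_0 and all B in the σ-algebra generated by ⋃_{j≥p} f^{−j}𝒲_0. Then for every p ≥ 1, Q_1 ≤ Q_{p+1} + μ(A ∩ {τ_A ≤ p}) + μ(A)·μ(τ_A ≤ p). -/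
open MeasureTheory

/-- The first hitting time of `A` under iteration of `f`:
`τ_A(x) = inf { n ≥ 1 : f^n x ∈ A }`, with value `⊤` if there is no such `n`. -/
noncomputable def tauA {Ω : Type*} (f : Ω → Ω) (A : Set Ω) (x : Ω) : ℕ∞ :=
  sInf {n : ℕ∞ | ∃ m : ℕ, n = (m : ℕ∞) ∧ 1 ≤ m ∧ f^[m] x ∈ A}

lemma tauA_le_iff {Ω : Type*} (f : Ω → Ω) (A : Set Ω) (x : Ω) (p : ℕ) :
    tauA f A x ≤ (p : ℕ∞) ↔ ∃ m : ℕ, 1 ≤ m ∧ m ≤ p ∧ f^[m] x ∈ A := by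
  constructor
  · intro h
    by_contra hc
    push_neg at hc
    have h1 : ((p : ℕ∞) + 1) ≤ tauA f A x := by
      apply le_sInf
      rintro n ⟨m, rfl, hm1, hmA⟩
      have hpm : p < m := by
        by_contra hmp
        push_neg at hmp
        exact hc m hm1 hmp hmA
      have : (p + 1 : ℕ) ≤ m := hpm
      exact_mod_cast this
    have hcon := le_trans h1 h
    have hlt : (p : ℕ∞) < (p : ℕ∞) + 1 :=
      (ENat.lt_add_one_iff (ENat.coe_ne_top p)).mpr le_rfl
    exact absurd hcon (not_le.mpr hlt)
  · rintro ⟨m, hm1, hmp, hA⟩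
    refine le_trans (sInf_le ⟨m, rfl, hm1, hA⟩) ?_
    exact_mod_cast hmp

/-- Trace lemma: if every generator of `S1` is a generator of `S2` or misses `Tᶜ`,
then every `generateFrom S1`-measurable set agrees on `Tᶜ` with a
`generateFrom S2`-measurable set. -/
lemma trace_lemma {Ω : Type*} (T : Set Ω) (S1 S2 : Set (Set Ω))
    (h : ∀ s ∈ S1, s ∈ S2 ∨ s ∩ Tᶜ = ∅) :
    ∀ B, MeasurableSet[MeasurableSpace.generateFrom S1] B →
      ∃ B', MeasurableSet[MeasurableSpace.generateFrom S2] B' ∧ B ∩ Tᶜ = B' ∩ Tᶜ := by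
  let m' : MeasurableSpace Ω :=
    { MeasurableSet' := fun B => ∃ B',
        MeasurableSet[MeasurableSpace.generateFrom S2] B' ∧ B ∩ Tᶜ = B' ∩ Tᶜ
      measurableSet_empty := ⟨∅, @MeasurableSet.empty _ (MeasurableSpace.generateFrom S2), rfl⟩
      measurableSet_compl := by
        rintro B ⟨B', hB', hEq⟩
        refine ⟨B'ᶜ, hB'.compl, ?_⟩
        ext x
        have := Set.ext_iff.mp hEq x
        simp only [Set.mem_inter_iff, Set.mem_compl_iff] at this ⊢
        tauto
      measurableSet_iUnion := by
        rintro s hs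
        choose B' hB' hEq using hs
        exact ⟨⋃ n, B' n, @MeasurableSet.iUnion _ _ (MeasurableSpace.generateFrom S2) _ _ hB', by
          rw [Set.iUnion_inter, Set.iUnion_inter]
          exact Set.iUnion_congr hEq⟩ }
  have hle : MeasurableSpace.generateFrom S1 ≤ m' := by
    apply MeasurableSpace.generateFrom_le
    intro s hs
    rcases h s hs with h2 | hempty
    · exact ⟨s, MeasurableSpace.measurableSet_generateFrom h2, rfl⟩
    · exact ⟨∅, @MeasurableSet.empty _ (MeasurableSpace.generateFrom S2), by rw [hempty]; simp⟩
  exact fun B hB => hle B hB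

/-- With `Q p` the supremum of `|μ(A' ∩ B) − μ(A')μ(B)|` over `A' ∈ 𝒲₀`
and `B` in the σ-algebra generated by `⋃_{j ≥ p} f^{-j} 𝒲₀`, and `W i ⊆ A` for all `i`,
one has `Q 1 ≤ Q (p+1) + μ(A ∩ {τ_A ≤ p}) + μ(A) μ(τ_A ≤ p)` for every `p ≥ 1`. -/
theorem stmt7 {Ω : Type*} [MeasurableSpace Ω] (μ : Measure Ω) [IsProbabilityMeasure μ]
    (f : Ω → Ω) (hf : Measurable f) (K : ℕ) (W : Fin K → Set Ω)
    (hWm : ∀ i, MeasurableSet (W i)) (A : Set Ω) (hAm : MeasurableSet A)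
    (hWA : ∀ i, W i ⊆ A)
    (Q : ℕ → ℝ)
    (hQ : ∀ p : ℕ, Q p = sSup {r : ℝ | ∃ i : Fin K, ∃ B : Set Ω,
      MeasurableSet[MeasurableSpace.generateFrom
          {S : Set Ω | ∃ j : ℕ, p ≤ j ∧ ∃ i' : Fin K, S = f^[j] ⁻¹' W i'}] B ∧
        r = |(μ (W i ∩ B)).toReal - (μ (W i)).toReal * (μ B).toReal|}) :
    ∀ p : ℕ, 1 ≤ p →
      Q 1 ≤ Q (p + 1) + (μ (A ∩ {x | tauA f A x ≤ (p : ℕ∞)})).toReal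
        + (μ A).toReal * (μ {x | tauA f A x ≤ (p : ℕ∞)}).toReal := by
  intro p hp
  set T : Set Ω := {x | tauA f A x ≤ (p : ℕ∞)} with hTdef
  have hTeq : T = ⋃ (m : ℕ) (_ : 1 ≤ m ∧ m ≤ p), f^[m] ⁻¹' A := by
    ext x
    simp only [hTdef, Set.mem_setOf_eq, Set.mem_iUnion, Set.mem_preimage, tauA_le_iff]
    tauto
  have hTm : MeasurableSet T := by
    rw [hTeq]
    exact MeasurableSet.iUnion fun m => MeasurableSet.iUnion fun _ => (hf.iterate m) hAm
  set S1 : Set (Set Ω) := {S : Set Ω | ∃ j : ℕ, 1 ≤ j ∧ ∃ i' : Fin K, S = f^[j] ⁻¹' W i'}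
    with hS1def
  set S2 : Set (Set Ω) := {S : Set Ω | ∃ j : ℕ, p + 1 ≤ j ∧ ∃ i' : Fin K, S = f^[j] ⁻¹' W i'}
    with hS2def
  -- ambient measurability
  have hg1 : MeasurableSpace.generateFrom S1 ≤ ‹MeasurableSpace Ω› := by
    apply MeasurableSpace.generateFrom_le
    rintro s ⟨j, hj, i', rfl⟩
    exact (hf.iterate j) (hWm i')
  have hg2 : MeasurableSpace.generateFrom S2 ≤ ‹MeasurableSpace Ω› := by
    apply MeasurableSpace.generateFrom_le
    rintro s ⟨j, hj, i', rfl⟩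
    exact (hf.iterate j) (hWm i')
  -- trace lemma hypothesis
  have htr := trace_lemma T S1 S2 (by
    rintro s ⟨j, hj, i', rfl⟩
    by_cases hjp : p + 1 ≤ j
    · exact Or.inl ⟨j, hjp, i', rfl⟩
    · push_neg at hjp
      right
      apply Set.eq_empty_iff_forall_notMem.mpr
      rintro x ⟨hx1, hx2⟩
      apply hx2
      rw [hTdef, Set.mem_setOf_eq, tauA_le_iff]
      exact ⟨j, hj, Nat.lt_succ_iff.mp hjp, hWA i' hx1⟩)
  -- the sets whose sSup define Q
  have hbdd : BddAbove {r : ℝ | ∃ i : Fin K, ∃ B : Set Ω,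
      MeasurableSet[MeasurableSpace.generateFrom S2] B ∧
        r = |(μ (W i ∩ B)).toReal - (μ (W i)).toReal * (μ B).toReal|} := by
    refine ⟨1, ?_⟩
    rintro r ⟨i, B, hB, rfl⟩
    have h1 : (μ (W i ∩ B)).toReal ≤ 1 := by
      simpa using ENNReal.toReal_mono (by simp) (prob_le_one (μ := μ))
    have h2 : (μ (W i)).toReal ≤ 1 := by
      simpa using ENNReal.toReal_mono (by simp) (prob_le_one (μ := μ))
    have h3 : (μ B).toReal ≤ 1 := by
      simpa using ENNReal.toReal_mono (by simp) (prob_le_one (μ := μ))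
    have h4 : (0:ℝ) ≤ (μ (W i ∩ B)).toReal := ENNReal.toReal_nonneg
    have h5 : (0:ℝ) ≤ (μ (W i)).toReal := ENNReal.toReal_nonneg
    have h6 : (0:ℝ) ≤ (μ B).toReal := ENNReal.toReal_nonneg
    rw [abs_le]
    constructor <;> nlinarith
  have ha0 : (0:ℝ) ≤ (μ (A ∩ T)).toReal := ENNReal.toReal_nonneg
  have ht0 : (0:ℝ) ≤ (μ T).toReal := ENNReal.toReal_nonneg
  have hQp1_nonneg : 0 ≤ Q (p + 1) := by
    rw [hQ]
    apply Real.sSup_nonneg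
    rintro r ⟨i, B, hB, rfl⟩
    exact abs_nonneg _
  rw [hQ 1]
  apply Real.sSup_le
  swap
  · have := mul_nonneg (ENNReal.toReal_nonneg (a := μ A)) ht0
    linarith
  rintro r ⟨i, B, hB, rfl⟩
  obtain ⟨B', hB', hBB'⟩ := htr B hB
  have hBm : MeasurableSet B := hg1 B hB
  have hB'm : MeasurableSet B' := hg2 B' hB'
  -- real-valued quantities
  have hfin : ∀ X : Set Ω, μ X ≠ ⊤ := fun X => measure_ne_top μ X
  have hsplit : ∀ X : Set Ω, MeasurableSet X →
      (μ X).toReal = (μ (X ∩ T)).toReal + (μ (X \ T)).toReal := by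
    intro X hX
    rw [← ENNReal.toReal_add (hfin _) (hfin _), measure_inter_add_diff X hTm]
  -- the parts off T agree
  have hdiffWB : (W i ∩ B) \ T = (W i ∩ B') \ T := by
    rw [Set.diff_eq, Set.diff_eq, Set.inter_assoc, Set.inter_assoc, hBB']
  have hdiffB : B \ T = B' \ T := by
    rw [Set.diff_eq, Set.diff_eq, hBB']
  -- bound |μ(Wi∩B) - μ(Wi∩B')|
  have key1 : |(μ (W i ∩ B)).toReal - (μ (W i ∩ B')).toReal| ≤ (μ (A ∩ T)).toReal := by
    rw [hsplit _ ((hWm i).inter hBm), hsplit _ ((hWm i).inter hB'm), hdiffWB]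
    have b1 : (μ (W i ∩ B ∩ T)).toReal ≤ (μ (A ∩ T)).toReal :=
      ENNReal.toReal_mono (hfin _) (measure_mono (by
        intro x hx; exact ⟨hWA i hx.1.1, hx.2⟩))
    have b2 : (μ (W i ∩ B' ∩ T)).toReal ≤ (μ (A ∩ T)).toReal :=
      ENNReal.toReal_mono (hfin _) (measure_mono (by
        intro x hx; exact ⟨hWA i hx.1.1, hx.2⟩))
    have c1 : (0:ℝ) ≤ (μ (W i ∩ B ∩ T)).toReal := ENNReal.toReal_nonneg
    have c2 : (0:ℝ) ≤ (μ (W i ∩ B' ∩ T)).toReal := ENNReal.toReal_nonneg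
    rw [abs_le]; constructor <;> linarith
  -- bound |μ(B) - μ(B')|
  have key2 : |(μ B).toReal - (μ B').toReal| ≤ (μ T).toReal := by
    rw [hsplit _ hBm, hsplit _ hB'm, hdiffB]
    have b1 : (μ (B ∩ T)).toReal ≤ (μ T).toReal :=
      ENNReal.toReal_mono (hfin _) (measure_mono Set.inter_subset_right)
    have b2 : (μ (B' ∩ T)).toReal ≤ (μ T).toReal :=
      ENNReal.toReal_mono (hfin _) (measure_mono Set.inter_subset_right)
    have c1 : (0:ℝ) ≤ (μ (B ∩ T)).toReal := ENNReal.toReal_nonneg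
    have c2 : (0:ℝ) ≤ (μ (B' ∩ T)).toReal := ENNReal.toReal_nonneg
    rw [abs_le]; constructor <;> linarith
  -- the primed term is at most Q (p+1)
  have hmem : |(μ (W i ∩ B')).toReal - (μ (W i)).toReal * (μ B').toReal| ≤ Q (p + 1) := by
    rw [hQ (p + 1)]
    exact le_csSup hbdd ⟨i, B', hB', rfl⟩
  -- combine
  have hwA : (μ (W i)).toReal ≤ (μ A).toReal :=
    ENNReal.toReal_mono (hfin _) (measure_mono (hWA i))
  have hw0 : (0:ℝ) ≤ (μ (W i)).toReal := ENNReal.toReal_nonneg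
  have htri : |(μ (W i ∩ B)).toReal - (μ (W i)).toReal * (μ B).toReal| ≤
      |(μ (W i ∩ B')).toReal - (μ (W i)).toReal * (μ B').toReal|
        + |(μ (W i ∩ B)).toReal - (μ (W i ∩ B')).toReal|
        + (μ (W i)).toReal * |(μ B).toReal - (μ B').toReal| := by
    have habs := abs_sub_abs_le_abs_sub ((μ (W i ∩ B)).toReal - (μ (W i)).toReal * (μ B).toReal)
      ((μ (W i ∩ B')).toReal - (μ (W i)).toReal * (μ B').toReal)
    have heq : ((μ (W i ∩ B)).toReal - (μ (W i)).toReal * (μ B).toReal)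
        - ((μ (W i ∩ B')).toReal - (μ (W i)).toReal * (μ B').toReal)
        = ((μ (W i ∩ B)).toReal - (μ (W i ∩ B')).toReal)
          - (μ (W i)).toReal * ((μ B).toReal - (μ B').toReal) := by ring
    have h2 : |((μ (W i ∩ B)).toReal - (μ (W i ∩ B')).toReal)
        - (μ (W i)).toReal * ((μ B).toReal - (μ B').toReal)| ≤
        |(μ (W i ∩ B)).toReal - (μ (W i ∩ B')).toReal|
          + |(μ (W i)).toReal * ((μ B).toReal - (μ B').toReal)| := abs_sub _ _
    rw [heq] at habs
    rw [abs_mul, abs_of_nonneg hw0] at h2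
    linarith
  have hmul : (μ (W i)).toReal * |(μ B).toReal - (μ B').toReal| ≤
      (μ A).toReal * (μ T).toReal :=
    mul_le_mul hwA key2 (abs_nonneg _) ENNReal.toReal_nonneg
  linarith
end

section
/- Let Y be a set, F : Y → Y a map, τ : Y → {1,2,3,…}, and let τ̄ > 0 be a real number. Define τ_k(y) = Σ_{j=0}^{k−1} τ(F^j y) (with τ_0 = 0). For each pair (y,ℓ) with y ∈ Y and 0 ≤ ℓ < τ(y), and each n ≥ 1, let N_n(y,ℓ) be the unique nonnegative integer satisfying τ_{N_n(y,ℓ)}(y) ≤ n + ℓ < τ_{N_n(y,ℓ)+1}(y). Then for every such (y,ℓ) and every n ≥ 1: max_{1≤k≤n} | k/τ̄ − N_k(y,ℓ) | ≤ τ̄^{−1} ( max_{0≤j≤n} |τ_j(y) − j τ̄| + max_{0≤j≤n} τ(F^j y) ). -/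
/-!
Write `τ_j` for the partial sums of the return times and `m = N_k`. Since every return
time is at least `1` and `ℓ < τ(y)`, at most `k` laps fit into time `k + ℓ`, so `m ≤ k ≤ n`.
The bracket `τ_m ≤ k + ℓ < τ_m + τ(F^m y)` puts `k` within `max ℓ τ(F^m y)` of `τ_m`, and
`τ_m` is within `max_{j ≤ n} |τ_j − j τ̄|` of `m τ̄`; dividing by `τ̄` gives the estimate.
-/

open Finset

lemma le_of_sum_range_le_add {a : ℕ → ℕ} (ha : ∀ j, 1 ≤ a j) {m k ℓ : ℕ} (hℓ : ℓ < a 0)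
    (h : ∑ j ∈ range m, a j ≤ k + ℓ) : m ≤ k := by
  cases m with
  | zero => exact k.zero_le
  | succ m =>
    rw [sum_range_succ'] at h
    have hm : m ≤ ∑ j ∈ range m, a (j + 1) := by
      simpa using card_nsmul_le_sum (range m) (fun j => a (j + 1)) 1 fun j _ => ha (j + 1)
    omega

lemma abs_natCast_sub_sum_range_le {a : ℕ → ℕ} {k ℓ m : ℕ}
    (h₁ : ∑ j ∈ range m, a j ≤ k + ℓ) (h₂ : k + ℓ < ∑ j ∈ range (m + 1), a j) :
    |(k : ℝ) - ∑ j ∈ range m, (a j : ℝ)| ≤ max (ℓ : ℝ) (a m) := by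
  rw [sum_range_succ] at h₂
  have h₁' : ∑ j ∈ range m, (a j : ℝ) ≤ k + ℓ := by exact_mod_cast h₁
  have h₂' : (k : ℝ) + ℓ < ∑ j ∈ range m, (a j : ℝ) + a m := by exact_mod_cast h₂
  rw [abs_le]
  constructor <;> linarith [le_max_left (ℓ : ℝ) (a m), le_max_right (ℓ : ℝ) (a m)]

lemma abs_div_sub_le_of_sum_range_bracket {a : ℕ → ℕ} (ha : ∀ j, 1 ≤ a j) {c : ℝ} (hc : 0 < c)
    {k ℓ m n : ℕ} (hℓ : ℓ < a 0) (hkn : k ≤ n)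
    (h₁ : ∑ j ∈ range m, a j ≤ k + ℓ) (h₂ : k + ℓ < ∑ j ∈ range (m + 1), a j) :
    |(k : ℝ) / c - m| ≤ c⁻¹ *
      ((range (n + 1)).sup' nonempty_range_add_one
          (fun j => |(∑ i ∈ range j, (a i : ℝ)) - (j : ℝ) * c|)
        + (range (n + 1)).sup' nonempty_range_add_one (fun j => (a j : ℝ))) := by
  have hmn : m < n + 1 := Nat.lt_succ_of_le ((le_of_sum_range_le_add ha hℓ h₁).trans hkn)
  have hdrift := le_sup' (fun j => |(∑ i ∈ range j, (a i : ℝ)) - (j : ℝ) * c|) (mem_range.2 hmn)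
  have hlap : max (ℓ : ℝ) (a m) ≤
      (range (n + 1)).sup' nonempty_range_add_one (fun j => (a j : ℝ)) :=
    max_le ((Nat.cast_le.2 hℓ.le).trans (le_sup' (fun j => (a j : ℝ)) (mem_range.2 n.succ_pos)))
      (le_sup' (fun j => (a j : ℝ)) (mem_range.2 hmn))
  have hbracket := abs_natCast_sub_sum_range_le h₁ h₂
  calc |(k : ℝ) / c - m| = c⁻¹ * |((k : ℝ) - ∑ j ∈ range m, (a j : ℝ))
        + ((∑ j ∈ range m, (a j : ℝ)) - m * c)| := by
        rw [← abs_of_pos (inv_pos.2 hc), ← abs_mul]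
        congr 1
        field_simp
        ring
    _ ≤ c⁻¹ * (|(k : ℝ) - ∑ j ∈ range m, (a j : ℝ)|
        + |(∑ j ∈ range m, (a j : ℝ)) - m * c|) := by
        gcongr
        exact abs_add_le _ _
    _ ≤ _ := by
        gcongr c⁻¹ * ?_
        linarith [hdrift, hbracket.trans hlap]

/-- Deterministic estimate for the lap number `N_n(y,ℓ)` of the tower
with return time `τ ≥ 1`: for all `1 ≤ k ≤ n`,
`|k/τ̄ − N_k(y,ℓ)| ≤ τ̄⁻¹ (max_{0≤j≤n} |τ_j(y) − j τ̄| + max_{0≤j≤n} τ(F^j y))`. -/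
theorem stmt9 {Y : Type*} (F : Y → Y) (τ : Y → ℕ) (hτ : ∀ y, 1 ≤ τ y)
    (τb : ℝ) (hτb : 0 < τb)
    (N : ℕ → Y → ℕ → ℕ)
    (hN : ∀ n : ℕ, 1 ≤ n → ∀ y : Y, ∀ ℓ : ℕ, ℓ < τ y →
      (∑ j ∈ Finset.range (N n y ℓ), τ (F^[j] y)) ≤ n + ℓ ∧
        n + ℓ < ∑ j ∈ Finset.range (N n y ℓ + 1), τ (F^[j] y)) :
    ∀ y : Y, ∀ ℓ : ℕ, ℓ < τ y → ∀ n : ℕ, ∀ hn : 1 ≤ n,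
      (Finset.Icc 1 n).sup' (Finset.nonempty_Icc.mpr hn)
          (fun k => |(k : ℝ) / τb - (N k y ℓ : ℝ)|)
        ≤ τb⁻¹ *
          ((Finset.range (n + 1)).sup' Finset.nonempty_range_add_one
              (fun j => |(∑ i ∈ Finset.range j, (τ (F^[i] y) : ℝ)) - (j : ℝ) * τb|)
            + (Finset.range (n + 1)).sup' Finset.nonempty_range_add_one
              (fun j => (τ (F^[j] y) : ℝ))) := by
  intro y ℓ hℓ n hn
  refine sup'_le _ _ fun k hk => ?_
  obtain ⟨hk₁, hkn⟩ := mem_Icc.1 hk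
  obtain ⟨h₁, h₂⟩ := hN k hk₁ y ℓ hℓ
  exact abs_div_sub_le_of_sum_range_bracket (a := fun j => τ (F^[j] y)) (fun j => hτ _) hτb
    hℓ hkn h₁ h₂
end

section
/- Let (Y,μ_Y) be a probability space, F : Y → Y a measure-preserving map, and τ : Y → {1,2,3,…} measurable with τ ∈ L^2(μ_Y); let τ̄ = ∫_Y τ dμ_Y. Define τ_k(y) = Σ_{j=0}^{k−1} τ(F^j y), the tower Δ = {(y,ℓ) : y ∈ Y, 0 ≤ ℓ < τ(y)} with probability measure μ_Δ given by ∫_Δ g dμ_Δ = τ̄^{−1} ∫_Y Σ_{ℓ=0}^{τ(y)−1} g(y,ℓ) dμ_Y(y), and for n ≥ 1 the lap number N_n(y,ℓ) as the unique nonnegative integer with τ_{N_n}(y) ≤ n + ℓ < τ_{N_n+1}(y). Suppose there is C_0 > 0 such that ‖ max_{0≤j≤n} |τ_j − j τ̄| ‖_{L^2(μ_Y)} ≤ C_0 n^{1/2} for all n ≥ 1. Then there exists C > 0, depending only on C_0, ‖τ‖_{L^2(μ_Y)} and τ̄, such that ∫_Δ max_{1≤k≤n} | N_k − k/τ̄ |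 dμ_Δ ≤ C n^{1/2} for all n ≥ 1. -/
open MeasureTheory Finset
open scoped ENNReal

/-!
Fix a point `(y, ℓ)` of the tower and `k ≤ n`, and put `m = N_k(y, ℓ)`, so that
`τ_m(y) ≤ k + ℓ < τ_{m+1}(y)`; since `τ ≥ 1` also `m ≤ k + ℓ`. If `τ(y) ≤ n`, then `m + 1 ≤ 2n`,
and comparing `τ_m`, `τ_{m+1}` with `m τ̄`, `(m + 1) τ̄` gives `|N_k − k/τ̄| ≤ M_{2n}(y) + τ(y)`,
where `M_{2n}(y) = max_{j ≤ 2n} |τ_j(y) − j τ̄|`. If `τ(y) > n`, the crude bound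
`N_k ≤ k + ℓ < 2τ(y)` suffices. Summing over the `τ(y)` levels, the integrand is at most
`τ M_{2n} + 2τ²`, and Cauchy–Schwarz bounds `∫ τ M_{2n}` by `‖τ‖₂ · C₀ (2n)^{1/2}`.
-/

section Birkhoff

variable {α : Type*}

lemma le_birkhoffSum_of_one_le {f : α → α} {g : α → ℕ} (hg : ∀ x, 1 ≤ g x) (n : ℕ) (x : α) :
    n ≤ birkhoffSum f g n x := by
  simpa [birkhoffSum] using card_nsmul_le_sum (range n) (fun k => g (f^[k] x)) 1 fun k _ => hg _

lemma natCast_birkhoffSum {R : Type*} [AddCommMonoidWithOne R] (f : α → α) (g : α → ℕ)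
    (n : ℕ) (x : α) : ((birkhoffSum f g n x : ℕ) : R) = birkhoffSum f (fun x => (g x : R)) n x :=
  map_birkhoffSum (Nat.castAddMonoidHom R) f g n x

noncomputable def maxBirkhoffDeviation (f : α → α) (g : α → ℝ) (c : ℝ) (n : ℕ) (x : α) : ℝ :=
  (range (n + 1)).sup' nonempty_range_add_one fun j => |birkhoffSum f g j x - j * c|

variable {f : α → α} {g : α → ℝ} {c : ℝ} {n : ℕ}

lemma abs_birkhoffSum_sub_le_maxBirkhoffDeviation {j : ℕ} (hj : j ≤ n) (x : α) :
    |birkhoffSum f g j x - j * c| ≤ maxBirkhoffDeviation f g c n x :=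
  le_sup' (fun j => |birkhoffSum f g j x - j * c|) (mem_range.2 (Nat.lt_succ_of_le hj))

lemma maxBirkhoffDeviation_nonneg (x : α) : 0 ≤ maxBirkhoffDeviation f g c n x :=
  (abs_nonneg _).trans (abs_birkhoffSum_sub_le_maxBirkhoffDeviation (Nat.zero_le n) x)

lemma measurable_maxBirkhoffDeviation [MeasurableSpace α] (hf : Measurable f)
    (hg : Measurable g) : Measurable (maxBirkhoffDeviation f g c n) :=
  measurable_range_sup'' fun j _ =>
    ((Finset.measurable_sum (range j) fun k _ => hg.comp (hf.iterate k)).sub_const _).abs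

end Birkhoff

lemma abs_mul_sub_le_of_le_of_lt {S : ℕ → ℝ} {c M x : ℝ} {m : ℕ} (hc : 0 ≤ c)
    (hm : |S m - m * c| ≤ M) (hm₁ : |S (m + 1) - (m + 1 : ℕ) * c| ≤ M)
    (hle : S m ≤ x) (hlt : x < S (m + 1)) : |m * c - x| ≤ M + c := by
  rw [abs_le] at hm hm₁ ⊢
  push_cast at hm₁
  constructor <;> linarith

section Lap

variable {α : Type*} {f : α → α} {τ : α → ℕ} {c : ℝ} {x : α} {n k ℓ m : ℕ}

lemma abs_sub_div_le_maxBirkhoffDeviation_add (hτ : ∀ x, 1 ≤ τ x) (hc : 1 ≤ c)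
    (hk : k ≤ n) (hℓ : ℓ < τ x) (hle : birkhoffSum f τ m x ≤ k + ℓ)
    (hlt : k + ℓ < birkhoffSum f τ (m + 1) x) :
    |(m : ℝ) - k / c| ≤ maxBirkhoffDeviation f (fun x => (τ x : ℝ)) c (2 * n) x + 2 * τ x := by
  set M := maxBirkhoffDeviation f (fun x => (τ x : ℝ)) c (2 * n) x
  have hM : 0 ≤ M := maxBirkhoffDeviation_nonneg x
  have hmkℓ : m ≤ k + ℓ := (le_birkhoffSum_of_one_le hτ m x).trans hle
  have hc₀ : 0 < c := one_pos.trans_le hc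
  have hℓ' : (ℓ : ℝ) + 1 ≤ τ x := by exact_mod_cast hℓ
  rcases le_or_gt (τ x) n with hτn | hnτ
  · have hinv : |(m : ℝ) * c - (k + ℓ : ℕ)| ≤ M + c :=
      abs_mul_sub_le_of_le_of_lt (S := fun j => birkhoffSum f (fun x => (τ x : ℝ)) j x) hc₀.le
        (abs_birkhoffSum_sub_le_maxBirkhoffDeviation (by omega) x)
        (abs_birkhoffSum_sub_le_maxBirkhoffDeviation (by omega) x)
        (by simpa only [← natCast_birkhoffSum] using Nat.cast_le.2 hle)
        (by simpa only [← natCast_birkhoffSum] using Nat.cast_lt.2 hlt)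
    have hmk : |(m : ℝ) * c - k| ≤ (M + 2 * τ x) * c := by
      push_cast at hinv
      rw [abs_le] at hinv ⊢
      constructor <;> nlinarith
    rw [← mul_div_cancel_right₀ (m : ℝ) hc₀.ne', ← sub_div, abs_div, abs_of_pos hc₀]
    exact div_le_of_le_mul₀ hc₀.le (by positivity) hmk
  · have hkc : (k : ℝ) / c ≤ k := div_le_self k.cast_nonneg hc
    have hkc₀ : 0 ≤ (k : ℝ) / c := by positivity
    have hm' : (m : ℝ) ≤ k + ℓ := by exact_mod_cast hmkℓ
    have hk' : (k : ℝ) + 1 ≤ τ x := by exact_mod_cast (hk.trans_lt hnτ)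
    rw [abs_le]
    constructor <;> linarith

lemma sum_sup'_abs_lap_sub_le (hτ : ∀ x, 1 ≤ τ x) (hc : 1 ≤ c) (hn : 1 ≤ n) (N : ℕ → ℕ → ℕ)
    (hN : ∀ k, 1 ≤ k → ∀ ℓ < τ x,
      birkhoffSum f τ (N k ℓ) x ≤ k + ℓ ∧ k + ℓ < birkhoffSum f τ (N k ℓ + 1) x) :
    ∑ ℓ ∈ range (τ x), (Icc 1 n).sup' (nonempty_Icc.2 hn) (fun k => |(N k ℓ : ℝ) - k / c|) ≤
      τ x * maxBirkhoffDeviation f (fun x => (τ x : ℝ)) c (2 * n) x + 2 * (τ x : ℝ) ^ 2 := by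
  calc _ ≤ ∑ _ℓ ∈ range (τ x),
          (maxBirkhoffDeviation f (fun x => (τ x : ℝ)) c (2 * n) x + 2 * τ x) := by
        refine sum_le_sum fun ℓ hℓ => sup'_le _ _ fun k hk => ?_
        obtain ⟨hk₁, hkn⟩ := mem_Icc.1 hk
        obtain ⟨hle, hlt⟩ := hN k hk₁ ℓ (mem_range.1 hℓ)
        exact abs_sub_div_le_maxBirkhoffDeviation_add hτ hc hkn (mem_range.1 hℓ) hle hlt
    _ = _ := by rw [sum_const, card_range, nsmul_eq_mul]; ring

end Lap

section Integration

variable {α : Type*} [MeasurableSpace α] {μ : Measure α}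

lemma ENNReal.lintegral_mul_le_ofReal_sqrt_mul {f g : α → ℝ≥0∞} (hf : AEMeasurable f μ)
    (hg : AEMeasurable g μ) {a b : ℝ} (ha : 0 ≤ a) (hb : 0 ≤ b)
    (hfa : ∫⁻ x, f x ^ 2 ∂μ ≤ ENNReal.ofReal a) (hgb : ∫⁻ x, g x ^ 2 ∂μ ≤ ENNReal.ofReal b) :
    ∫⁻ x, f x * g x ∂μ ≤ ENNReal.ofReal (Real.sqrt (a * b)) :=
  calc ∫⁻ x, f x * g x ∂μ
      ≤ (∫⁻ x, f x ^ 2 ∂μ) ^ (1 / 2 : ℝ) * (∫⁻ x, g x ^ 2 ∂μ) ^ (1 / 2 : ℝ) := by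
        simpa only [ENNReal.rpow_two, Pi.mul_apply] using
          ENNReal.lintegral_mul_le_Lp_mul_Lq μ .two_two hf hg
    _ ≤ ENNReal.ofReal a ^ (1 / 2 : ℝ) * ENNReal.ofReal b ^ (1 / 2 : ℝ) := by gcongr
    _ = ENNReal.ofReal (Real.sqrt (a * b)) := by
        rw [ENNReal.ofReal_rpow_of_nonneg ha (by norm_num),
          ENNReal.ofReal_rpow_of_nonneg hb (by norm_num), ← ENNReal.ofReal_mul (by positivity),
          ← Real.sqrt_eq_rpow, ← Real.sqrt_eq_rpow, Real.sqrt_mul ha]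

lemma lintegral_ofReal_mul_add_two_mul_sq_le {τ : α → ℕ} {M : α → ℝ} (hτm : Measurable τ)
    (hMm : Measurable M) (hM : ∀ x, 0 ≤ M x) {A B : ℝ} (hA : 0 ≤ A) (hB : 0 ≤ B)
    (hτA : ∫⁻ x, (τ x : ℝ≥0∞) ^ 2 ∂μ ≤ ENNReal.ofReal A)
    (hMB : ∫⁻ x, ENNReal.ofReal (M x ^ 2) ∂μ ≤ ENNReal.ofReal B) :
    ∫⁻ x, ENNReal.ofReal (τ x * M x + 2 * (τ x : ℝ) ^ 2) ∂μ ≤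
      ENNReal.ofReal (Real.sqrt (A * B) + 2 * A) := by
  have hτ : Measurable fun x => (τ x : ℝ≥0∞) := measurable_from_top.comp hτm
  have hM' : Measurable fun x => ENNReal.ofReal (M x) := ENNReal.measurable_ofReal.comp hMm
  have hsplit : ∀ x, ENNReal.ofReal (τ x * M x + 2 * (τ x : ℝ) ^ 2) =
      (τ x : ℝ≥0∞) * ENNReal.ofReal (M x) + 2 * (τ x : ℝ≥0∞) ^ 2 := fun x => by
    rw [← ENNReal.ofReal_natCast, ← ENNReal.ofReal_mul (by positivity), ← ENNReal.ofReal_ofNat 2,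
      ← ENNReal.ofReal_pow (by positivity), ← ENNReal.ofReal_mul (by positivity),
      ← ENNReal.ofReal_add (mul_nonneg (by positivity) (hM x)) (by positivity)]
  have hMB' : ∫⁻ x, ENNReal.ofReal (M x) ^ 2 ∂μ ≤ ENNReal.ofReal B := by
    simpa only [ENNReal.ofReal_pow (hM _)] using hMB
  rw [lintegral_congr hsplit,
    lintegral_add_left (f := fun x => (τ x : ℝ≥0∞) * ENNReal.ofReal (M x)) (hτ.mul hM'),
    lintegral_const_mul _ (hτ.pow_const 2),
    ENNReal.ofReal_add (by positivity) (by positivity), ENNReal.ofReal_mul zero_le_two,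
    ENNReal.ofReal_ofNat]
  gcongr
  exact ENNReal.lintegral_mul_le_ofReal_sqrt_mul hτ.aemeasurable hM'.aemeasurable hA hB hτA hMB'

lemma one_le_integral_natCast [IsProbabilityMeasure μ] {τ : α → ℕ} (hτm : Measurable τ)
    (hτ : ∀ x, 1 ≤ τ x) (hfin : ∫⁻ x, (τ x : ℝ≥0∞) ∂μ ≠ ∞) : 1 ≤ ∫ x, (τ x : ℝ) ∂μ := by
  have hint : Integrable (fun x => (τ x : ℝ)) μ := by
    simpa using
      integrable_toReal_of_lintegral_ne_top (measurable_from_top.comp hτm).aemeasurable hfin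
  simpa using integral_mono (integrable_const 1) hint fun x => (Nat.one_le_cast.2 (hτ x))

end Integration

theorem stmt10_general {Y : Type*} [MeasurableSpace Y] (μY : Measure Y) [IsProbabilityMeasure μY]
    (F : Y → Y) (hF : MeasurePreserving F μY μY)
    (τ : Y → ℕ) (hτm : Measurable τ) (hτ1 : ∀ y, 1 ≤ τ y)
    (hτL2 : ∫⁻ y, ((τ y : ℝ≥0∞)) ^ 2 ∂μY < ⊤)
    (τb : ℝ) (hτb : τb = ∫ y, (τ y : ℝ) ∂μY)
    (N : ℕ → Y → ℕ → ℕ)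
    (hN : ∀ n : ℕ, 1 ≤ n → ∀ y : Y, ∀ ℓ : ℕ, ℓ < τ y →
      (∑ j ∈ Finset.range (N n y ℓ), τ (F^[j] y)) ≤ n + ℓ ∧
        n + ℓ < ∑ j ∈ Finset.range (N n y ℓ + 1), τ (F^[j] y))
    (C₀ : ℝ)
    (hL2 : ∀ n : ℕ, 1 ≤ n →
      (∫⁻ y, ENNReal.ofReal
          (((Finset.range (n + 1)).sup' ⟨0, Finset.mem_range.mpr (Nat.succ_pos n)⟩
            (fun j => |(∑ i ∈ Finset.range j, (τ (F^[i] y) : ℝ)) - (j : ℝ) * τb|)) ^ 2) ∂μY)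
        ≤ ENNReal.ofReal (C₀ ^ 2 * n)) :
    ∃ C > (0 : ℝ), ∀ n : ℕ, ∀ hn : 1 ≤ n,
      ENNReal.ofReal τb⁻¹ *
          (∫⁻ y, ENNReal.ofReal
            (∑ ℓ ∈ Finset.range (τ y),
              (Finset.Icc 1 n).sup' (Finset.nonempty_Icc.mpr hn)
                (fun k => |(N k y ℓ : ℝ) - (k : ℝ) / τb|)) ∂μY)
        ≤ ENNReal.ofReal (C * Real.sqrt n) := by
  have hτL1 : ∫⁻ y, (τ y : ℝ≥0∞) ∂μY ≠ ∞ := ne_top_of_le_ne_top hτL2.ne <|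
    lintegral_mono fun y => le_self_pow₀ (Nat.one_le_cast.2 (hτ1 y)) two_ne_zero
  have hτb1 : 1 ≤ τb := hτb ▸ one_le_integral_natCast hτm hτ1 hτL1
  set A := (∫⁻ y, (τ y : ℝ≥0∞) ^ 2 ∂μY).toReal
  have hA : ∫⁻ y, (τ y : ℝ≥0∞) ^ 2 ∂μY ≤ ENNReal.ofReal A := (ENNReal.ofReal_toReal hτL2.ne).ge
  refine ⟨Real.sqrt (2 * A * C₀ ^ 2) + 2 * A + 1, by positivity, fun n hn => ?_⟩
  have hsqrt :
      Real.sqrt (A * (C₀ ^ 2 * (2 * n : ℕ))) = Real.sqrt (2 * A * C₀ ^ 2) * Real.sqrt n := by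
    rw [← Real.sqrt_mul (by positivity)]; push_cast; ring_nf
  calc _ ≤ ∫⁻ y, ENNReal.ofReal (∑ ℓ ∈ Finset.range (τ y),
              (Finset.Icc 1 n).sup' (Finset.nonempty_Icc.mpr hn)
                (fun k => |(N k y ℓ : ℝ) - (k : ℝ) / τb|)) ∂μY :=
        mul_le_of_le_one_left' (ENNReal.ofReal_le_one.2 (inv_le_one_of_one_le₀ hτb1))
    _ ≤ ∫⁻ y, ENNReal.ofReal (τ y * maxBirkhoffDeviation F (fun y => (τ y : ℝ)) τb (2 * n) y
          + 2 * (τ y : ℝ) ^ 2) ∂μY :=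
        lintegral_mono fun y =>
          ENNReal.ofReal_le_ofReal (sum_sup'_abs_lap_sub_le hτ1 hτb1 hn _ (hN · · y))
    _ ≤ ENNReal.ofReal (Real.sqrt (A * (C₀ ^ 2 * (2 * n : ℕ))) + 2 * A) :=
        lintegral_ofReal_mul_add_two_mul_sq_le hτm
          (measurable_maxBirkhoffDeviation hF.measurable (measurable_from_top.comp hτm))
          maxBirkhoffDeviation_nonneg ENNReal.toReal_nonneg (by positivity) hA
          (hL2 (2 * n) (by omega))
    _ ≤ ENNReal.ofReal ((Real.sqrt (2 * A * C₀ ^ 2) + 2 * A + 1) * Real.sqrt n) := by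
        refine ENNReal.ofReal_le_ofReal ?_
        rw [hsqrt]
        nlinarith [Real.sqrt_nonneg (2 * A * C₀ ^ 2), Real.one_le_sqrt.2 (Nat.one_le_cast.2 hn),
          (ENNReal.toReal_nonneg : 0 ≤ A)]

/-- `L¹(μ_Δ)` bound for the lap number: if
`‖max_{0≤j≤n} |τ_j − j τ̄|‖_{L²(μ_Y)} ≤ C₀ n^{1/2}`, then
`∫_Δ max_{1≤k≤n} |N_k − k/τ̄| dμ_Δ ≤ C n^{1/2}`, where `μ_Δ` is the tower measure,
given by `∫_Δ g dμ_Δ = τ̄⁻¹ ∫_Y ∑_{ℓ<τ(y)} g(y,ℓ) dμ_Y(y)`. -/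
theorem stmt10 {Y : Type*} [MeasurableSpace Y] (μY : Measure Y) [IsProbabilityMeasure μY]
    (F : Y → Y) (hF : MeasurePreserving F μY μY)
    (τ : Y → ℕ) (hτm : Measurable τ) (hτ1 : ∀ y, 1 ≤ τ y)
    (hτL2 : ∫⁻ y, ((τ y : ℝ≥0∞)) ^ 2 ∂μY < ⊤)
    (τb : ℝ) (hτb : τb = ∫ y, (τ y : ℝ) ∂μY)
    (N : ℕ → Y → ℕ → ℕ)
    (hN : ∀ n : ℕ, 1 ≤ n → ∀ y : Y, ∀ ℓ : ℕ, ℓ < τ y →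
      (∑ j ∈ Finset.range (N n y ℓ), τ (F^[j] y)) ≤ n + ℓ ∧
        n + ℓ < ∑ j ∈ Finset.range (N n y ℓ + 1), τ (F^[j] y))
    (C₀ : ℝ) (hC₀ : 0 < C₀)
    (hL2 : ∀ n : ℕ, 1 ≤ n →
      (∫⁻ y, ENNReal.ofReal
          (((Finset.range (n + 1)).sup' ⟨0, Finset.mem_range.mpr (Nat.succ_pos n)⟩
            (fun j => |(∑ i ∈ Finset.range j, (τ (F^[i] y) : ℝ)) - (j : ℝ) * τb|)) ^ 2) ∂μY)
        ≤ ENNReal.ofReal (C₀ ^ 2 * n)) :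
    ∃ C > (0 : ℝ), ∀ n : ℕ, ∀ hn : 1 ≤ n,
      ENNReal.ofReal τb⁻¹ *
          (∫⁻ y, ENNReal.ofReal
            (∑ ℓ ∈ Finset.range (τ y),
              (Finset.Icc 1 n).sup' (Finset.nonempty_Icc.mpr hn)
                (fun k => |(N k y ℓ : ℝ) - (k : ℝ) / τb|)) ∂μY)
        ≤ ENNReal.ofReal (C * Real.sqrt n) :=
  stmt10_general μY F hF τ hτm hτ1 hτL2 τb hτb N hN C₀ hL2
end

section
/- Let a < b and let φ : [a,b] → D([0,1],ℝ^d) be a map into càdlàg paths, and let Π ⊆ [a,b] be an at most countable set such that: (i) the function t ↦ φ(t)(1) is càdlàg on [a,b]; (ii) for every t ∉ Π the path φ(t) is constant on [0,1]; (iii) for every ε > 0 there are only finitely many t ∈ Π with sup_{s∈[0,1]} |φ(t)(s) − φ(t)(0)| > ε. Then for all t ∈ (a,b] and all ε > 0 there exists γ > 0 such that sup_{u ∈ (t−γ,t)∩[a,b]} sup_{s∈[0,1]} |φ(u)(s) − L(t)| < ε, where L(t) = lim_{u↑t} φ(u)(1); and for all t ∈ [a,b) and all ε > 0 there exists γ >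 0 such that sup_{u ∈ (t,t+γ)∩[a,b]} sup_{s∈[0,1]} |φ(u)(s) − φ(t)(1)| < ε. -/
lemma aux_gap (F : Set ℝ) (hF : F.Finite) (t : ℝ) :
    ∃ γ > (0:ℝ), ∀ x ∈ F, x ≠ t → γ ≤ |x - t| := by
  classical
  set s := (hF.toFinset.filter (· ≠ t)).image (fun x => |x - t|) with hs
  by_cases h : s.Nonempty
  · refine ⟨s.min' h, ?_, ?_⟩
    · have hm := s.min'_mem h
      simp only [hs, Finset.mem_image, Finset.mem_filter] at hm
      obtain ⟨x, ⟨_, hxt⟩, hx2⟩ := hm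
      rw [← hx2]
      exact abs_sub_pos.mpr hxt
    · intro x hx hxt
      apply s.min'_le
      simp only [hs, Finset.mem_image, Finset.mem_filter]
      exact ⟨x, ⟨hF.mem_toFinset.mpr hx, hxt⟩, rfl⟩
  · refine ⟨1, one_pos, fun x hx hxt => absurd ?_ h⟩
    refine ⟨|x - t|, ?_⟩
    simp only [hs, Finset.mem_image, Finset.mem_filter]
    exact ⟨x, ⟨hF.mem_toFinset.mpr hx, hxt⟩, rfl⟩



/-- Local non-oscillation for decorated càdlàg paths: if `(φ, Π)` is a
decorated path (endpoint path càdlàg, `φ(t)` constant off `Π`, and only finitely many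
decorations of oscillation `> ε` for each `ε > 0`), then near each `t` from the left the
whole decorations are uniformly close to the left limit `L` of `u ↦ φ(u)(1)`, and from
the right they are uniformly close to `φ(t)(1)`. -/
theorem stmt14 {d : ℕ} (a b : ℝ) (hab : a < b)
    (φ : ℝ → ℝ → EuclideanSpace ℝ (Fin d))
    (Pi : Set ℝ) (hPisub : Pi ⊆ Set.Icc a b) (hPic : Pi.Countable)
    (hφD : ∀ t ∈ Set.Icc a b, Cadlag 0 1 (φ t))
    (hi : Cadlag a b (fun t => φ t 1))
    (hii : ∀ t ∈ Set.Icc a b, t ∉ Pi → ∀ s ∈ Set.Icc (0 : ℝ) 1, φ t s = φ t 0)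
    (hiii : ∀ ε : ℝ, 0 < ε →
      {t ∈ Pi | ∃ s ∈ Set.Icc (0 : ℝ) 1, ε < ‖φ t s - φ t 0‖}.Finite) :
    (∀ t ∈ Set.Ioc a b, ∀ L : EuclideanSpace ℝ (Fin d),
      Filter.Tendsto (fun u => φ u 1) (nhdsWithin t (Set.Ico a t)) (nhds L) →
      ∀ ε : ℝ, 0 < ε → ∃ γ > (0 : ℝ), ∀ u ∈ Set.Ioo (t - γ) t ∩ Set.Icc a b,
        ∀ s ∈ Set.Icc (0 : ℝ) 1, ‖φ u s - L‖ < ε)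
    ∧ (∀ t ∈ Set.Ico a b, ∀ ε : ℝ, 0 < ε →
        ∃ γ > (0 : ℝ), ∀ u ∈ Set.Ioo t (t + γ) ∩ Set.Icc a b,
          ∀ s ∈ Set.Icc (0 : ℝ) 1, ‖φ u s - φ t 1‖ < ε) := by
  have key : ∀ t ∈ Set.Icc a b, ∀ L : EuclideanSpace ℝ (Fin d), ∀ ε : ℝ, 0 < ε →
      ∀ δ > (0:ℝ), ∃ γ > (0:ℝ), γ ≤ δ ∧ ∀ u ∈ Set.Icc a b, u ≠ t → |u - t| < γ →
        ‖φ u 1 - L‖ < ε / 4 → ∀ s ∈ Set.Icc (0 : ℝ) 1, ‖φ u s - L‖ < ε := by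
    intro t _ L ε hε δ hδ
    obtain ⟨γ₀, hγ₀, hgap⟩ := aux_gap _ (hiii (ε/4) (by linarith)) t
    refine ⟨min δ γ₀, lt_min hδ hγ₀, min_le_left _ _, ?_⟩
    intro u hu hut hdist h1 s hs
    have hnotF : u ∉ {t ∈ Pi | ∃ s ∈ Set.Icc (0 : ℝ) 1, ε/4 < ‖φ t s - φ t 0‖} := by
      intro hmem
      exact absurd (hgap u hmem hut) (not_le.mpr (lt_of_lt_of_le hdist (min_le_right _ _)))
    by_cases hPi : u ∈ Pi
    · have hosc : ∀ s ∈ Set.Icc (0 : ℝ) 1, ‖φ u s - φ u 0‖ ≤ ε/4 := by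
        intro s hs
        by_contra hc
        exact hnotF ⟨hPi, s, hs, not_le.mp hc⟩
      have h01 : ‖φ u 0 - φ u 1‖ ≤ ε/4 := by
        rw [norm_sub_rev]
        exact hosc 1 (by norm_num)
      have hbnd : ‖φ u s - L‖ ≤ ‖φ u s - φ u 0‖ + ‖φ u 0 - φ u 1‖ + ‖φ u 1 - L‖ :=
        norm_sub_le_norm_sub_add_norm_sub _ _ _ |>.trans
          (by gcongr; exact norm_sub_le_norm_sub_add_norm_sub _ _ _)
      have := hosc s hs
      linarith
    · have hconst := hii u hu hPi
      have : φ u s = φ u 1 := by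
        rw [hconst s hs, hconst 1 (by norm_num)]
      rw [this]
      linarith
  constructor
  · intro t ht L hL ε hε
    rw [Metric.tendsto_nhdsWithin_nhds] at hL
    obtain ⟨δ, hδ, hδP⟩ := hL (ε/4) (by linarith)
    obtain ⟨γ, hγ, hγδ, hγP⟩ := key t ⟨le_of_lt ht.1, ht.2⟩ L ε hε δ hδ
    refine ⟨γ, hγ, ?_⟩
    rintro u ⟨⟨hu1, hu2⟩, hu3⟩ s hs
    have hIco : u ∈ Set.Ico a t := ⟨hu3.1, hu2⟩
    have hdist : |u - t| < γ := by
      rw [abs_sub_lt_iff]; constructor <;> linarith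
    have h1 : ‖φ u 1 - L‖ < ε / 4 := by
      have := hδP hIco (by rw [Real.dist_eq]; exact lt_of_lt_of_le hdist hγδ)
      rwa [dist_eq_norm] at this
    exact hγP u hu3 (ne_of_lt hu2) hdist h1 s hs
  · intro t ht ε hε
    have hR := hi.1 t ht
    rw [Metric.tendsto_nhdsWithin_nhds] at hR
    obtain ⟨δ, hδ, hδP⟩ := hR (ε/4) (by linarith)
    obtain ⟨γ, hγ, hγδ, hγP⟩ := key t ⟨ht.1, le_of_lt ht.2⟩ (φ t 1) ε hε δ hδ
    refine ⟨γ, hγ, ?_⟩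
    rintro u ⟨⟨hu1, hu2⟩, hu3⟩ s hs
    have hIoc : u ∈ Set.Ioc t b := ⟨hu1, hu3.2⟩
    have hdist : |u - t| < γ := by
      rw [abs_sub_lt_iff]; constructor <;> linarith
    have h1 : ‖φ u 1 - φ t 1‖ < ε / 4 := by
      have := hδP hIoc (by rw [Real.dist_eq]; exact lt_of_lt_of_le hdist hγδ)
      rwa [dist_eq_norm] at this
    exact hγP u hu3 (ne_of_gt hu1) hdist h1 s hs
end

section
/- Let h = (h_1,h_2) ∈ C^1([0,1],ℝ^2) with h(0) = (0,0) and h(1) = (1,1). For n ≥ 3 define W_n = (W_n^1, W_n^2) : [0,1] → ℝ^2 by W_n(t) = (0,0) for 0 ≤ t < 1/2 − 1/n, W_n(t) = h(n(t − 1/2 + 1/n)) for 1/2 − 1/n ≤ t < 1/2, and W_n(t) = (1,1) for 1/2 ≤ t ≤ 1. Define X_n = (X_n^1, X_n^2) : [0,1] → ℝ^2 by X_n^1 = W_n^1 and X_n^2(t) = ∫_0^t X_n^1(s) (W_n^2)'(s) ds, where (W_n^2)' denotes the piecewise derivative (equal to 0 off [1/2−1/n, 1/2) and to n·h_2'(n(s−1/2+1/n))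 on it). Then: (1) for every t ∈ [0,1], W_n(t) → L(t) as n → ∞, where L(t) = (0,0) for t < 1/2 and L(t) = (1,1) for t ≥ 1/2; and (2) for every t ∈ [0,1], X_n(t) → X(t) as n → ∞, where X(t) = (0,0) for t < 1/2 and X(t) = (1, ∫_0^1 h_1(s) h_2'(s) ds) for t ≥ 1/2. -/
/-!
Every sequence in the statement is eventually constant in `n`. For `t < 1/2`, `W_n(t)` and
`X_n(t)` vanish as soon as `t < 1/2 - 1/n`, and for `t ≥ 1/2` we have `W_n(t) = (1,1)`. The
integrand `X_n^1 (W_n^2)'` is supported on `[1/2 - 1/n, 1/2)`, where it equals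
`n (h₁ h₂')(n (s - 1/2 + 1/n))`; the affine substitution `u = n (s - 1/2 + 1/n)` maps this window
onto `[0,1]`, so `X_n^2(t) = ∫₀¹ h₁ h₂'` for every `n ≥ 2` and `t ≥ 1/2`.
-/

open Filter Topology Set MeasureTheory

lemma intervalIntegral_indicator_Ico {μ : Measure ℝ} [NullSingletonClass μ] {f : ℝ → ℝ}
    {a b c d : ℝ} (hca : c ≤ a) (hab : a ≤ b) (hbd : b ≤ d) :
    ∫ x in c..d, (Ico a b).indicator f x ∂μ = ∫ x in a..b, f x ∂μ := by
  rw [intervalIntegral.integral_of_le (hca.trans (hab.trans hbd)),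
    intervalIntegral.integral_of_le hab,
    integral_congr_ae (ae_restrict_of_ae (indicator_ae_eq_of_ae_eq_set Ico_ae_eq_Ioc)),
    integral_indicator measurableSet_Ioc, Measure.restrict_restrict measurableSet_Ioc,
    inter_eq_left.2 (Ioc_subset_Ioc hca hbd)]

lemma intervalIntegral_comp_mul_sub_add_one_div (F : ℝ → ℝ) (b : ℝ) {c : ℝ} (hc : c ≠ 0) :
    ∫ x in b - 1/c..b, c * F (c * (x - b + 1/c)) = ∫ x in (0 : ℝ)..1, F x := by
  have hF : ∀ x, F (c * (x - b + 1/c)) = F (c * x - (c * b - 1)) := fun x ↦ by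
    congr 1; field_simp; ring
  simp_rw [hF]
  rw [intervalIntegral.integral_const_mul, ← smul_eq_mul,
    intervalIntegral.smul_integral_comp_mul_sub]
  congr 1 <;> field_simp <;> ring

section Excursion

noncomputable def excursion (h : ℝ → ℝ) (n : ℕ) (t : ℝ) : ℝ :=
  if t < 1/2 - 1/(n : ℝ) then 0 else if t < 1/2 then h ((n : ℝ) * (t - 1/2 + 1/(n : ℝ))) else 1

noncomputable def excursionDeriv (h' : ℝ → ℝ) (n : ℕ) (t : ℝ) : ℝ :=
  if 1/2 - 1/(n : ℝ) ≤ t ∧ t < 1/2 then (n : ℝ) * h' ((n : ℝ) * (t - 1/2 + 1/(n : ℝ))) else 0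

variable {h : ℝ → ℝ} {n : ℕ} {t : ℝ}

lemma excursion_of_lt (ht : t < 1/2 - 1/(n : ℝ)) : excursion h n t = 0 := if_pos ht

lemma excursion_of_half_le (ht : 1/2 ≤ t) : excursion h n t = 1 := by
  have : (0 : ℝ) ≤ 1/(n : ℝ) := by positivity
  rw [excursion, if_neg (by linarith), if_neg (by linarith)]

lemma excursion_of_mem_Ico (ht : t ∈ Ico (1/2 - 1/(n : ℝ)) (1/2)) :
    excursion h n t = h ((n : ℝ) * (t - 1/2 + 1/(n : ℝ))) := by
  rw [excursion, if_neg (not_lt.2 ht.1), if_pos ht.2]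

lemma excursionDeriv_eq_indicator (h' : ℝ → ℝ) (n : ℕ) :
    excursionDeriv h' n = (Ico (1/2 - 1/(n : ℝ)) (1/2)).indicator
      (fun t ↦ (n : ℝ) * h' ((n : ℝ) * (t - 1/2 + 1/(n : ℝ)))) := by
  ext t
  simp only [excursionDeriv, indicator_apply, mem_Ico]

lemma eventually_lt_half_sub_one_div (ht : t < 1/2) :
    ∀ᶠ n : ℕ in atTop, t < 1/2 - 1/(n : ℝ) :=
  (tendsto_one_div_atTop_nhds_zero_nat.eventually (gt_mem_nhds (sub_pos.2 ht))).mono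
    fun _ hn ↦ by linarith

lemma excursion_eventually_eq_zero (h : ℝ → ℝ) (ht : t < 1/2) :
    ∀ᶠ n : ℕ in atTop, excursion h n t = 0 :=
  (eventually_lt_half_sub_one_div ht).mono fun _ ↦ excursion_of_lt

lemma integral_excursion_mul_excursionDeriv_of_lt (h k : ℝ → ℝ) (ht₀ : 0 ≤ t)
    (ht : t < 1/2 - 1/(n : ℝ)) :
    ∫ s in (0 : ℝ)..t, excursion h n s * excursionDeriv k n s = 0 := by
  have hvanish : EqOn (fun s ↦ excursion h n s * excursionDeriv k n s) 0 (uIcc 0 t) :=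
    fun s hs ↦ by
      rw [uIcc_of_le ht₀] at hs
      simp only [excursion_of_lt (hs.2.trans_lt ht), zero_mul, Pi.zero_apply]
  rw [intervalIntegral.integral_congr hvanish, Pi.zero_def, intervalIntegral.integral_zero]

lemma integral_excursion_mul_excursionDeriv_of_half_le (h k : ℝ → ℝ) (hn : 2 ≤ n)
    (ht : 1/2 ≤ t) :
    ∫ s in (0 : ℝ)..t, excursion h n s * excursionDeriv k n s = ∫ s in (0 : ℝ)..1, h s * k s := by
  have hn₀ : (n : ℝ) ≠ 0 := by positivity
  have hwindow : (0 : ℝ) ≤ 1/2 - 1/(n : ℝ) := by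
    rw [sub_nonneg, div_le_div_iff₀ (by positivity) two_pos]
    exact_mod_cast (by omega : 1 * 2 ≤ 1 * n)
  have hintegrand : (fun s ↦ excursion h n s * excursionDeriv k n s) =
      (Ico (1/2 - 1/(n : ℝ)) (1/2)).indicator fun s ↦
        (n : ℝ) * (h ((n : ℝ) * (s - 1/2 + 1/(n : ℝ))) * k ((n : ℝ) * (s - 1/2 + 1/(n : ℝ)))) := by
    ext s
    rw [excursionDeriv_eq_indicator]
    by_cases hs : s ∈ Ico (1/2 - 1/(n : ℝ)) (1/2)
    · rw [indicator_of_mem hs, indicator_of_mem hs, excursion_of_mem_Ico hs]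
      ring
    · rw [indicator_of_notMem hs, indicator_of_notMem hs, mul_zero]
  rw [hintegrand, intervalIntegral_indicator_Ico hwindow (sub_le_self _ (by positivity)) ht]
  exact intervalIntegral_comp_mul_sub_add_one_div (fun u ↦ h u * k u) _ hn₀

end Excursion

theorem stmt15_general (h₁ h₂ : ℝ → ℝ)
    (W₁ W₂ g X₂ : ℕ → ℝ → ℝ)
    (hW₁ : ∀ n : ℕ, ∀ t : ℝ, W₁ n t = if t < 1/2 - 1/(n : ℝ) then 0
      else if t < 1/2 then h₁ ((n : ℝ) * (t - 1/2 + 1/(n : ℝ))) else 1)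
    (hW₂ : ∀ n : ℕ, ∀ t : ℝ, W₂ n t = if t < 1/2 - 1/(n : ℝ) then 0
      else if t < 1/2 then h₂ ((n : ℝ) * (t - 1/2 + 1/(n : ℝ))) else 1)
    (hg : ∀ n : ℕ, ∀ t : ℝ, g n t = if 1/2 - 1/(n : ℝ) ≤ t ∧ t < 1/2
      then (n : ℝ) * derivWithin h₂ (Set.Icc 0 1) ((n : ℝ) * (t - 1/2 + 1/(n : ℝ)))
      else 0)
    (hX₂ : ∀ n : ℕ, ∀ t : ℝ, X₂ n t = ∫ s in (0 : ℝ)..t, W₁ n s * g n s) :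
    ∀ t ∈ Set.Icc (0 : ℝ) 1,
      ((t < 1/2 → Tendsto (fun n : ℕ => (W₁ n t, W₂ n t)) atTop (𝓝 ((0 : ℝ), (0 : ℝ))))
        ∧ (1/2 ≤ t → Tendsto (fun n : ℕ => (W₁ n t, W₂ n t)) atTop (𝓝 ((1 : ℝ), (1 : ℝ)))))
      ∧ ((t < 1/2 → Tendsto (fun n : ℕ => (W₁ n t, X₂ n t)) atTop (𝓝 ((0 : ℝ), (0 : ℝ))))
        ∧ (1/2 ≤ t → Tendsto (fun n : ℕ => (W₁ n t, X₂ n t)) atTop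
            (𝓝 ((1 : ℝ), ∫ s in (0 : ℝ)..1, h₁ s * derivWithin h₂ (Set.Icc 0 1) s)))) := by
  obtain rfl : W₁ = excursion h₁ := funext₂ hW₁
  obtain rfl : W₂ = excursion h₂ := funext₂ hW₂
  obtain rfl : g = excursionDeriv (derivWithin h₂ (Icc 0 1)) := funext₂ hg
  simp only [hX₂]
  rintro t ⟨ht₀, -⟩
  refine ⟨⟨fun ht ↦ ?_, fun ht ↦ ?_⟩, fun ht ↦ ?_, fun ht ↦ ?_⟩
  · exact (tendsto_nhds_of_eventually_eq (excursion_eventually_eq_zero h₁ ht)).prodMk_nhds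
      (tendsto_nhds_of_eventually_eq (excursion_eventually_eq_zero h₂ ht))
  · simp only [excursion_of_half_le ht]
    exact tendsto_const_nhds
  · exact (tendsto_nhds_of_eventually_eq (excursion_eventually_eq_zero h₁ ht)).prodMk_nhds
      (tendsto_nhds_of_eventually_eq ((eventually_lt_half_sub_one_div ht).mono fun _ ↦
        integral_excursion_mul_excursionDeriv_of_lt _ _ ht₀))
  · simp only [excursion_of_half_le ht]
    exact tendsto_const_nhds.prodMk_nhds (tendsto_nhds_of_eventually_eq
      ((eventually_ge_atTop 2).mono fun _ hn ↦
        integral_excursion_mul_excursionDeriv_of_half_le _ _ hn ht))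

/-- For the explicit excursion approximation `W_n` built from
`h = (h₁,h₂) ∈ C¹([0,1],ℝ²)` with `h(0) = (0,0)`, `h(1) = (1,1)`, the paths `W_n`
converge pointwise to the jump path `L`, and the solutions `X_n = (W_n^1, ∫ X_n^1 dW_n^2)`
converge pointwise to the path jumping to `(1, ∫₀¹ h₁ h₂')`. -/
theorem stmt15 (h₁ h₂ : ℝ → ℝ)
    (hh₁ : ContDiffOn ℝ 1 h₁ (Set.Icc 0 1)) (hh₂ : ContDiffOn ℝ 1 h₂ (Set.Icc 0 1))
    (h₁0 : h₁ 0 = 0) (h₂0 : h₂ 0 = 0) (h₁1 : h₁ 1 = 1) (h₂1 : h₂ 1 = 1)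
    (W₁ W₂ g X₂ : ℕ → ℝ → ℝ)
    (hW₁ : ∀ n : ℕ, ∀ t : ℝ, W₁ n t = if t < 1/2 - 1/(n : ℝ) then 0
      else if t < 1/2 then h₁ ((n : ℝ) * (t - 1/2 + 1/(n : ℝ))) else 1)
    (hW₂ : ∀ n : ℕ, ∀ t : ℝ, W₂ n t = if t < 1/2 - 1/(n : ℝ) then 0
      else if t < 1/2 then h₂ ((n : ℝ) * (t - 1/2 + 1/(n : ℝ))) else 1)
    (hg : ∀ n : ℕ, ∀ t : ℝ, g n t = if 1/2 - 1/(n : ℝ) ≤ t ∧ t < 1/2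
      then (n : ℝ) * derivWithin h₂ (Set.Icc 0 1) ((n : ℝ) * (t - 1/2 + 1/(n : ℝ)))
      else 0)
    (hX₂ : ∀ n : ℕ, ∀ t : ℝ, X₂ n t = ∫ s in (0 : ℝ)..t, W₁ n s * g n s) :
    ∀ t ∈ Set.Icc (0 : ℝ) 1,
      ((t < 1/2 → Tendsto (fun n : ℕ => (W₁ n t, W₂ n t)) atTop (𝓝 ((0 : ℝ), (0 : ℝ))))
        ∧ (1/2 ≤ t → Tendsto (fun n : ℕ => (W₁ n t, W₂ n t)) atTop (𝓝 ((1 : ℝ), (1 : ℝ)))))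
      ∧ ((t < 1/2 → Tendsto (fun n : ℕ => (W₁ n t, X₂ n t)) atTop (𝓝 ((0 : ℝ), (0 : ℝ))))
        ∧ (1/2 ≤ t → Tendsto (fun n : ℕ => (W₁ n t, X₂ n t)) atTop
            (𝓝 ((1 : ℝ), ∫ s in (0 : ℝ)..1, h₁ s * derivWithin h₂ (Set.Icc 0 1) s)))) :=
  stmt15_general h₁ h₂ W₁ W₂ g X₂ hW₁ hW₂ hg hX₂
end

section
/- Let B : ℝ^m → ℝ^{m×d} be bounded and Lipschitz, let u ∈ ℝ^d, λ ∈ ℝ, z_0 ∈ ℝ^m, and let g : [0,1] → ℝ be Lipschitz with g(0) = 0; set P(s) = g(s)·u, so that P is a Lipschitz path taking values on a line through the origin with P(0) = 0 and P(1) = g(1)·u. Let Z : [0,1] → ℝ^m be the unique Lipschitz solution of Z(s) = z_0 + λ ∫_0^s g'(r) B(Z(r)) u dr (with g' the a.e. derivative of g), and let Z^ℓ : [0,1] → ℝ^m be the unique solution of Z^ℓ(s) = z_0 + λ g(1) ∫_0^s B(Z^ℓ(r)) u dr. Then Z(1) = Z^ℓ(1). -/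
/-!
Let `φ` solve the autonomous equation `φ' = λ B(φ) u`, `φ(0) = z₀`, on a large interval
(Picard–Lindelöf). For a Lipschitz `G` with `G(0) = 0`, the chain rule for the a.e. derivative
of `G` shows that `s ↦ φ(G s)` solves `X(s) = z₀ + ∫₀ˢ G'(r) λ B(X r) u dr`, and Grönwall's
inequality makes continuous solutions of this equation unique. Taking `G` an extension of `g`
gives `Z(1) = φ(g 1)`; taking `G(s) = g(1) s` gives `Zℓ(1) = φ(g 1)`.
-/

open MeasureTheory Set Filter intervalIntegral
open scoped NNReal

section

variable {E : Type*} [NormedAddCommGroup E] [NormedSpace ℝ E]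

theorem LipschitzOnWith.integral_eq_sub_of_ae_hasDerivAt [CompleteSpace E] {F F' : ℝ → E}
    {K : ℝ≥0} {a b : ℝ} (hab : a ≤ b) (hF : LipschitzOnWith K F (Icc a b))
    (hF' : ∀ᵐ x, x ∈ Ioo a b → HasDerivAt F (F' x) x)
    (hint : IntervalIntegrable F' volume a b) :
    ∫ x in a..b, F' x = F b - F a := by
  have ha : ∀ᵐ x, x ≠ a := by simp [ae_iff, measure_singleton]
  have hb : ∀ᵐ x, x ≠ b := by simp [ae_iff, measure_singleton]
  have hbound : ∀ᵐ x, x ∈ Ioc a b → ‖F' x‖ ≤ K := by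
    filter_upwards [hF', hb] with x hx hxb hxI
    have hxI' : x ∈ Ioo a b := ⟨hxI.1, hxI.2.lt_of_ne hxb⟩
    rw [← (hx hxI').deriv]
    exact norm_deriv_le_of_lipschitzOn (Icc_mem_nhds hxI'.1 hxI'.2) hF
  set P : ℝ → E := fun x => ∫ t in a..x, F' t
  have hPlip : LipschitzOnWith K P (Icc a b) := by
    refine LipschitzOnWith.of_dist_le_mul fun x hx y hy => ?_
    have hsub : ∀ {c}, c ∈ Icc a b → uIcc a c ⊆ uIcc a b := fun hc =>
      uIcc_subset_uIcc_left (uIcc_of_le hab ▸ hc)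
    rw [dist_eq_norm, Real.dist_eq,
      integral_interval_sub_left (hint.mono_set (hsub hx)) (hint.mono_set (hsub hy))]
    refine norm_integral_le_of_norm_le_const_ae ?_
    filter_upwards [hbound] with t ht ⟨hyt, htx⟩
    exact ht ⟨(le_min hy.1 hx.1).trans_lt hyt, htx.trans (max_le hy.2 hx.2)⟩
  have hac : AbsolutelyContinuousOnInterval (fun x => F x - P x) a b := by
    rw [← uIcc_of_le hab] at hF hPlip
    exact hF.absolutelyContinuousOnInterval.sub hPlip.absolutelyContinuousOnInterval
  have hconst : ∀ᵐ x, x ∈ uIcc a b → HasDerivAt (fun x => F x - P x) 0 x := by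
    filter_upwards [hF', hint.ae_hasDerivAt_integral, ha, hb] with x hF'x hPx hxa hxb hx
    rw [uIcc_of_le hab] at hx
    have hxI : x ∈ Ioo a b := ⟨hx.1.lt_of_ne hxa.symm, hx.2.lt_of_ne hxb⟩
    simpa using
      (hF'x hxI).fun_sub (hPx (Ioo_subset_Icc_self.trans Icc_subset_uIcc hxI) a left_mem_uIcc)
  obtain ⟨C, hC⟩ := hac.const_of_ae_hasDerivAt_zero hconst
  have hCa := hC a left_mem_uIcc
  have hCb := hC b right_mem_uIcc
  simp only [P, integral_same, sub_zero] at hCa hCb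
  rw [← hCa] at hCb
  rw [← hCb, sub_sub_cancel]

theorem eq_zero_of_le_mul_integral {N : ℝ → ℝ} {C a b : ℝ} (hN : ContinuousOn N (Icc a b))
    (hN₀ : ∀ x ∈ Icc a b, 0 ≤ N x) (hle : ∀ x ∈ Icc a b, N x ≤ C * ∫ t in a..x, N t) :
    ∀ x ∈ Icc a b, N x = 0 := by
  intro x hx
  have hab : a ≤ b := hx.1.trans hx.2
  -- extend `N` continuously to `ℝ` so that its primitive is differentiable everywhere
  set N' : ℝ → ℝ := fun t => N (projIcc a b hab t)
  have hN' : Continuous N' :=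
    hN.comp_continuous (continuous_subtype_val.comp continuous_projIcc) fun t => Subtype.prop _
  have hNN' : EqOn N' N (Icc a b) := fun t ht => by simp [N', projIcc_of_mem hab ht]
  have hW : ∀ y ∈ Icc a b, ∫ t in a..y, N' t = ∫ t in a..y, N t := fun y hy =>
    integral_congr (hNN'.mono (uIcc_subset_Icc (left_mem_Icc.2 hab) hy))
  have hW₀ := eq_zero_of_abs_deriv_le_mul_abs_self_of_eq_zero_right (f' := N') (K := C)
    (fun y _ => (hN'.integral_hasStrictDerivAt a y).hasDerivAt.continuousAt.continuousWithinAt)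
    (fun y _ => (hN'.integral_hasStrictDerivAt a y).hasDerivAt.hasDerivWithinAt)
    integral_same fun y hy => by
      have hy' := Ico_subset_Icc_self hy
      rw [hNN' hy', hW y hy', Real.norm_of_nonneg (hN₀ y hy'), Real.norm_of_nonneg
        (integral_nonneg hy'.1 fun t ht => hN₀ t ⟨ht.1, ht.2.trans hy'.2⟩)]
      exact hle y hy'
  refine le_antisymm ?_ (hN₀ x hx)
  simpa [← hW x hx, hW₀ x hx] using hle x hx

theorem eqOn_of_forall_eq_add_integral_smul {f : E → E} {K : ℝ≥0} (hf : LipschitzWith K f)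
    {w : ℝ → ℝ} {c a b : ℝ} (hw : IntervalIntegrable w volume a b)
    (hwc : ∀ᵐ r, r ∈ Ioc a b → |w r| ≤ c) {x₀ : E} {X Y : ℝ → E}
    (hX : ContinuousOn X (Icc a b)) (hY : ContinuousOn Y (Icc a b))
    (hXeq : ∀ s ∈ Icc a b, X s = x₀ + ∫ r in a..s, w r • f (X r))
    (hYeq : ∀ s ∈ Icc a b, Y s = x₀ + ∫ r in a..s, w r • f (Y r)) :
    EqOn X Y (Icc a b) := by
  have hsub : ∀ {s}, s ∈ Icc a b → uIcc a s ⊆ Icc a b := fun hs =>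
    uIcc_subset_Icc (left_mem_Icc.2 (hs.1.trans hs.2)) hs
  have hint : ∀ {V : ℝ → E}, ContinuousOn V (Icc a b) → ∀ {s}, s ∈ Icc a b →
      IntervalIntegrable (fun r => w r • f (V r)) volume a s := fun hV s hs =>
    (hw.mono_set (uIcc_subset_uIcc_left (uIcc_of_le (hs.1.trans hs.2) ▸ hs))).smul_continuousOn
      ((hf.continuous.comp_continuousOn hV).mono (hsub hs))
  have hN : ∀ s ∈ Icc a b, ‖X s - Y s‖ ≤ c * K * ∫ r in a..s, ‖X r - Y r‖ := by
    intro s hs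
    rw [← intervalIntegral.integral_const_mul]
    calc ‖X s - Y s‖ = ‖∫ r in a..s, w r • (f (X r) - f (Y r))‖ := by
          rw [hXeq s hs, hYeq s hs, add_sub_add_left_eq_sub,
            ← intervalIntegral.integral_sub (hint hX hs) (hint hY hs)]
          simp_rw [smul_sub]
      _ ≤ ∫ r in a..s, c * K * ‖X r - Y r‖ := by
          refine norm_integral_le_of_norm_le hs.1 ?_
            ((continuousOn_const.mul (hX.sub hY).norm).mono (hsub hs)).intervalIntegrable
          filter_upwards [hwc] with r hr hrs
          have hwr := hr ⟨hrs.1, hrs.2.trans hs.2⟩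
          rw [norm_smul, Real.norm_eq_abs, mul_assoc]
          exact mul_le_mul hwr (hf.norm_sub_le _ _) (norm_nonneg _) ((abs_nonneg _).trans hwr)
  intro s hs
  exact sub_eq_zero.1 <| norm_eq_zero.1 <|
    eq_zero_of_le_mul_integral (hX.sub hY).norm (fun _ _ => norm_nonneg _) hN s hs

theorem exists_lipschitzOnWith_forall_hasDerivAt_Ioo [CompleteSpace E] {f : E → E} {K L : ℝ≥0}
    (hf : LipschitzWith K f) (hbd : ∀ x, ‖f x‖ ≤ L) (x₀ : E) {R : ℝ} (hR : 0 ≤ R) :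
    ∃ φ : ℝ → E, φ 0 = x₀ ∧ LipschitzOnWith L φ (Ioo (-R) R) ∧
      ∀ t ∈ Ioo (-R) R, HasDerivAt φ (f (φ t)) t := by
  have hPL : IsPicardLindelof (fun _ => f) (tmin := -R) (tmax := R) ⟨0, by simp [hR]⟩ x₀
      (L * R.toNNReal) 0 L K :=
    .of_time_independent (fun x _ => hbd x) hf.lipschitzOnWith (by simp [hR])
  obtain ⟨φ, hφ₀, hφ⟩ := hPL.exists_eq_forall_mem_Icc_hasDerivWithinAt₀
  refine ⟨φ, hφ₀, ?_, fun t ht =>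
    (hφ t (Ioo_subset_Icc_self ht)).hasDerivAt (Icc_mem_nhds ht.1 ht.2)⟩
  exact ((convex_Icc _ _).lipschitzOnWith_of_nnnorm_hasDerivWithin_le hφ
    fun t _ => hbd (φ t)).mono Ioo_subset_Icc_self

theorem forall_comp_eq_add_integral_deriv_smul [CompleteSpace E] {f : E → E} (hf : Continuous f)
    {φ : ℝ → E} {U : Set ℝ} {Kφ : ℝ≥0} (hφ : LipschitzOnWith Kφ φ U)
    (hφ' : ∀ t ∈ U, HasDerivAt φ (f (φ t)) t) {G : ℝ → ℝ} {KG : ℝ≥0} (hG : LipschitzWith KG G)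
    {a b : ℝ} (hGU : MapsTo G (Icc a b) U) :
    ∀ s ∈ Icc a b, φ (G s) = φ (G a) + ∫ r in a..s, deriv G r • f (φ (G r)) := by
  intro s hs
  have hsub : Icc a s ⊆ Icc a b := Icc_subset_Icc_right hs.2
  have hlip : LipschitzOnWith (Kφ * KG) (fun r => φ (G r)) (Icc a s) :=
    hφ.comp hG.lipschitzOnWith (hGU.mono_left hsub)
  rw [hlip.integral_eq_sub_of_ae_hasDerivAt hs.1 ?_ ?_, add_sub_cancel]
  · filter_upwards [hG.ae_differentiableAt_of_real] with r hr hrs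
    exact (hφ' (G r) (hGU (hsub (Ioo_subset_Icc_self hrs)))).scomp r hr.hasDerivAt
  · refine hG.lipschitzOnWith.absolutelyContinuousOnInterval.intervalIntegrable_deriv
      |>.smul_continuousOn ?_
    rw [uIcc_of_le hs.1]
    exact hf.comp_continuousOn hlip.continuousOn

theorem eqOn_comp_of_forall_eq_add_integral_deriv_smul [CompleteSpace E] {f : E → E}
    {K L : ℝ≥0} (hf : LipschitzWith K f) {φ : ℝ → E} {x₀ : E} {R : ℝ} (hφ₀ : φ 0 = x₀)
    (hφ : LipschitzOnWith L φ (Ioo (-R) R)) (hφ' : ∀ t ∈ Ioo (-R) R, HasDerivAt φ (f (φ t)) t)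
    {G : ℝ → ℝ} {KG : ℝ≥0} (hG : LipschitzWith KG G) {a b : ℝ} (hGa : G a = 0)
    (hR : KG * (b - a) < R) {X : ℝ → E} (hX : ContinuousOn X (Icc a b))
    (hXeq : ∀ s ∈ Icc a b, X s = x₀ + ∫ r in a..s, deriv G r • f (X r)) :
    EqOn X (fun s => φ (G s)) (Icc a b) := by
  have hGU : MapsTo G (Icc a b) (Ioo (-R) R) := fun r hr => by
    have hGr := hG.dist_le_mul r a
    rw [Real.dist_eq, Real.dist_eq, hGa, sub_zero, abs_of_nonneg (sub_nonneg.2 hr.1)] at hGr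
    exact abs_lt.1 <| hGr.trans_lt <|
      (mul_le_mul_of_nonneg_left (sub_le_sub_right hr.2 a) KG.2).trans_lt hR
  refine eqOn_of_forall_eq_add_integral_smul hf (c := KG)
    hG.lipschitzOnWith.absolutelyContinuousOnInterval.intervalIntegrable_deriv
    (ae_of_all _ fun r _ => norm_deriv_le_of_lipschitz hG) hX
    (hφ.continuousOn.comp hG.continuous.continuousOn hGU) hXeq ?_
  simpa [hGa, hφ₀] using forall_comp_eq_add_integral_deriv_smul hf.continuous hφ hφ' hG hGU

theorem apply_eq_of_forall_eq_add_integral_deriv_smul [CompleteSpace E] {f : E → E}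
    {K L : ℝ≥0} (hf : LipschitzWith K f) (hbd : ∀ x, ‖f x‖ ≤ L) {x₀ : E} {a b : ℝ} (hab : a ≤ b)
    {G₁ G₂ : ℝ → ℝ} {K₁ K₂ : ℝ≥0} (hG₁ : LipschitzWith K₁ G₁) (hG₂ : LipschitzWith K₂ G₂)
    (hG₁a : G₁ a = 0) (hG₂a : G₂ a = 0) (hGb : G₁ b = G₂ b) {X₁ X₂ : ℝ → E}
    (hX₁ : ContinuousOn X₁ (Icc a b)) (hX₂ : ContinuousOn X₂ (Icc a b))
    (hX₁eq : ∀ s ∈ Icc a b, X₁ s = x₀ + ∫ r in a..s, deriv G₁ r • f (X₁ r))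
    (hX₂eq : ∀ s ∈ Icc a b, X₂ s = x₀ + ∫ r in a..s, deriv G₂ r • f (X₂ r)) :
    X₁ b = X₂ b := by
  have hK₁ : 0 ≤ (K₁ : ℝ) * (b - a) := mul_nonneg K₁.2 (sub_nonneg.2 hab)
  have hK₂ : 0 ≤ (K₂ : ℝ) * (b - a) := mul_nonneg K₂.2 (sub_nonneg.2 hab)
  set R : ℝ := K₁ * (b - a) + K₂ * (b - a) + 1
  obtain ⟨φ, hφ₀, hφ, hφ'⟩ :=
    exists_lipschitzOnWith_forall_hasDerivAt_Ioo hf hbd x₀ (by positivity : 0 ≤ R)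
  have hb := right_mem_Icc.2 hab
  rw [eqOn_comp_of_forall_eq_add_integral_deriv_smul hf hφ₀ hφ hφ' hG₁ hG₁a (by linarith) hX₁
    hX₁eq hb, eqOn_comp_of_forall_eq_add_integral_deriv_smul hf hφ₀ hφ hφ' hG₂ hG₂a
    (by linarith) hX₂ hX₂eq hb]
  exact congrArg φ hGb

end

theorem derivWithin_Icc_eq_deriv_of_eqOn {g G : ℝ → ℝ} {a b r : ℝ} (hgG : EqOn g G (Icc a b))
    (hr : r ∈ Ioo a b) : derivWithin g (Icc a b) r = deriv G r := by
  rw [derivWithin_congr hgG (hgG (Ioo_subset_Icc_self hr)),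
    derivWithin_of_mem_nhds (Icc_mem_nhds hr.1 hr.2)]

/-- A linear excursion can be replaced by its chord: if `Z` solves
`dZ = λ B(Z) dP` along the profile `P(s) = g(s) u` (a path on a line through `0`), and
`Zℓ` solves the ODE driven by the straight line with the same endpoint,
`dZℓ = λ g(1) B(Zℓ) u ds`, with the same initial value `z₀`, then `Z(1) = Zℓ(1)`. -/
theorem stmt16 {m d : ℕ}
    (B : EuclideanSpace ℝ (Fin m) → EuclideanSpace ℝ (Fin d) →L[ℝ] EuclideanSpace ℝ (Fin m))
    (M : ℝ) (hBbd : ∀ x, ‖B x‖ ≤ M) (K : NNReal) (hBlip : LipschitzWith K B)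
    (u : EuclideanSpace ℝ (Fin d)) (lam : ℝ) (z₀ : EuclideanSpace ℝ (Fin m))
    (g : ℝ → ℝ) (Kg : NNReal) (hg : LipschitzOnWith Kg g (Set.Icc 0 1)) (hg0 : g 0 = 0)
    (Z Zl : ℝ → EuclideanSpace ℝ (Fin m))
    (KZ : NNReal) (hZlip : LipschitzOnWith KZ Z (Set.Icc 0 1))
    (hZ : ∀ s ∈ Set.Icc (0 : ℝ) 1,
      Z s = z₀ + lam • ∫ r in (0 : ℝ)..s, derivWithin g (Set.Icc 0 1) r • (B (Z r)) u)
    (hZlcont : ContinuousOn Zl (Set.Icc 0 1))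
    (hZl : ∀ s ∈ Set.Icc (0 : ℝ) 1,
      Zl s = z₀ + (lam * g 1) • ∫ r in (0 : ℝ)..s, (B (Zl r)) u) :
    Z 1 = Zl 1 := by
  set T := lam • ContinuousLinearMap.apply ℝ (EuclideanSpace ℝ (Fin m)) u
  have hT : ∀ x, T (B x) = lam • B x u := fun x => rfl
  have hbd : ∀ x, ‖T (B x)‖ ≤ ((‖T‖₊ * M.toNNReal : ℝ≥0) : ℝ) := fun x =>
    (T.le_opNorm _).trans (by push_cast; gcongr; exact (hBbd x).trans (le_max_left _ _))
  obtain ⟨G, hG, hgG⟩ := hg.extend_real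
  have hZ' : ∀ s ∈ Icc (0 : ℝ) 1, Z s = z₀ + ∫ r in (0 : ℝ)..s, deriv G r • T (B (Z r)) := by
    intro s hs
    rw [hZ s hs, ← intervalIntegral.integral_smul]
    congr 1
    refine integral_congr_ae ?_
    have hne : ∀ᵐ r : ℝ, r ≠ 1 := by simp [ae_iff, measure_singleton]
    filter_upwards [hne] with r hr1 hr
    rw [uIoc_of_le hs.1] at hr
    rw [← derivWithin_Icc_eq_deriv_of_eqOn hgG ⟨hr.1, (hr.2.trans hs.2).lt_of_ne hr1⟩, hT,
      smul_comm]
  have hZl' : ∀ s ∈ Icc (0 : ℝ) 1,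
      Zl s = z₀ + ∫ r in (0 : ℝ)..s, deriv (fun t => g 1 • t) r • T (B (Zl r)) := by
    intro s hs
    simp [hZl s hs, hT, ← intervalIntegral.integral_smul, smul_smul, mul_comm]
  exact apply_eq_of_forall_eq_add_integral_deriv_smul (f := fun x => T (B x))
    (T.lipschitz.comp hBlip) hbd zero_le_one
    hG (lipschitzWith_smul (g 1)) (by rw [← hgG (left_mem_Icc.2 zero_le_one), hg0]) (smul_zero _)
    (by rw [← hgG (right_mem_Icc.2 zero_le_one), smul_eq_mul, mul_one]) hZlip.continuousOn
    hZlcont hZ' hZl'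
end
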